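/- arXiv:2202.09104 — 6 statements merged into one kernel-verified Lean document; each statement's English description precedes it below -/
import Mathlib

section
/- Formality is hereditary: if A is a formal central arrangement in V and Z ∈ L(A), then the restriction A^Z is a formal arrangement in Z. -/
open Submodule

section ArrangementBasics

variable {𝕂 : Type*} [Field 𝕂] {V : Type*} [AddCommGroup V] [Module 𝕂 V]

/-- `H` is a (linear) hyperplane: the kernel of a nonzero linear form. -/
def IsHyperplane (H : Submodule 𝕂 V) : Prop :=
  ∃ f : Module.Dual 𝕂 V, f ≠ 0 ∧ LinearMap.ker f = H

/-- A central arrangement: a finite set of linear hyperplanes. -/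
def IsArrangement (A : Set (Submodule 𝕂 V)) : Prop :=
  A.Finite ∧ ∀ H ∈ A, IsHyperplane H

/-- The intersection lattice `L(A)`: all intersections of subsets of `A`
(with the ambient space `⊤ = sInf ∅` included). -/
def interLattice (A : Set (Submodule 𝕂 V)) : Set (Submodule 𝕂 V) :=
  {X | ∃ B ⊆ A, X = sInf B}

/-- The rank of an intersection: its codimension in the ambient space. -/
noncomputable def rk (X : Submodule 𝕂 V) : ℕ := Module.finrank 𝕂 (V ⧸ X)

/-- The localization `A_X` of `A` at `X`: all hyperplanes of `A` containing `X`. -/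
def locz (A : Set (Submodule 𝕂 V)) (X : Submodule 𝕂 V) : Set (Submodule 𝕂 V) :=
  {H | H ∈ A ∧ X ≤ H}

/-- The restriction `A^Z` of `A` to `Z`, an arrangement in (the vector space) `Z`:
the subspaces `Z ∩ H` for `H ∈ A ∖ A_Z`, viewed as submodules of `Z`. -/
def restr (A : Set (Submodule 𝕂 V)) (Z : Submodule 𝕂 V) : Set (Submodule 𝕂 ↥Z) :=
  {K | ∃ H ∈ A, ¬ Z ≤ H ∧ K = (Z ⊓ H).comap Z.subtype}

/-- `α` is a choice of defining linear forms for the arrangement `A`. -/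
def IsDefiningForms (A : Set (Submodule 𝕂 V)) (α : Submodule 𝕂 V → Module.Dual 𝕂 V) : Prop :=
  ∀ H ∈ A, LinearMap.ker (α H) = H

/-- The relation space `F(A)` with respect to the chosen defining forms `α`:
the kernel of `⊕_{H ∈ A} 𝕂·e_H → V*`, `e_H ↦ α_H`, realized as the space of finitely
supported coefficient functions supported on `A` whose linear combination vanishes. -/
noncomputable def relSpace (A : Set (Submodule 𝕂 V)) (α : Submodule 𝕂 V → Module.Dual 𝕂 V) :
    Submodule 𝕂 (Submodule 𝕂 V →₀ 𝕂) :=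
  Finsupp.supported 𝕂 𝕂 A ⊓ LinearMap.ker (Finsupp.linearCombination 𝕂 α)

/-- `F_2(A)`: the span of the elements of `F(A)` of length at most `3`. -/
noncomputable def relSpace2 (A : Set (Submodule 𝕂 V)) (α : Submodule 𝕂 V → Module.Dual 𝕂 V) :
    Submodule 𝕂 (Submodule 𝕂 V →₀ 𝕂) :=
  Submodule.span 𝕂 {c | c ∈ relSpace A α ∧ c.support.card ≤ 3}

/-- `A` is formal if `F_2(A) = F(A)` (for any choice of defining forms). -/
def IsFormal (A : Set (Submodule 𝕂 V)) : Prop :=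
  ∀ α : Submodule 𝕂 V → Module.Dual 𝕂 V,
    IsDefiningForms A α → relSpace2 A α = relSpace A α

end ArrangementBasics


/-!
Given defining forms `β` of `A^Z`, choose the defining forms `α` of `A` so that `α_H|_Z = β_{Z ∩ H}`
whenever `Z ⊄ H`. Then `e_H ↦ e_{Z ∩ H}` (and `e_H ↦ 0` for `Z ⊆ H`) maps `F(A)` to `F(A^Z)` without
increasing lengths, so it maps `F_2(A)` into `F_2(A^Z)`. It is onto: a relation among the `β`
lifts to a combination of the `α_H` vanishing on `Z = ⋂_{H ∈ B} H`, which is therefore a combination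
of the `α_H`, `H ∈ B`; subtracting the latter gives a relation of `A` with the same image.
Hence `F(A) = F_2(A)` forces `F(A^Z) = F_2(A^Z)`.
-/

open Finsupp LinearMap

section RelationSpaces

variable {𝕂 : Type*} [Field 𝕂] {V W : Type*} [AddCommGroup V] [Module 𝕂 V]
  [AddCommGroup W] [Module 𝕂 W]

lemma relSpace2_le_relSpace (A : Set (Submodule 𝕂 V)) (α : Submodule 𝕂 V → Module.Dual 𝕂 V) :
    relSpace2 A α ≤ relSpace A α :=
  span_le.2 fun _ hc => hc.1

lemma relSpace2_eq_relSpace_of_le_map {A : Set (Submodule 𝕂 V)} {α : Submodule 𝕂 V → Module.Dual 𝕂 V}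
    {A' : Set (Submodule 𝕂 W)} {β : Submodule 𝕂 W → Module.Dual 𝕂 W}
    (π : (Submodule 𝕂 V →₀ 𝕂) →ₗ[𝕂] (Submodule 𝕂 W →₀ 𝕂))
    (hπ : ∀ c ∈ relSpace A α, π c ∈ relSpace A' β)
    (hcard : ∀ c, (π c).support.card ≤ c.support.card)
    (hsurj : relSpace A' β ≤ (relSpace A α).map π) (hformal : relSpace2 A α = relSpace A α) :
    relSpace2 A' β = relSpace A' β := by
  refine (relSpace2_le_relSpace A' β).antisymm ?_
  calc relSpace A' β ≤ (relSpace A α).map π := hsurj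
    _ = (relSpace2 A α).map π := by rw [hformal]
    _ ≤ relSpace2 A' β := by
      rw [relSpace2, Submodule.map_span, span_le]
      rintro _ ⟨c, ⟨hc, hc3⟩, rfl⟩
      exact subset_span ⟨hπ c hc, (hcard c).trans hc3⟩

lemma exists_ker_eq_and_comp_eq (p : W →ₗ[𝕂] V) {f : Module.Dual 𝕂 V} {g : Module.Dual 𝕂 W}
    (hker : ker g = ker (f ∘ₗ p)) (hg : g ≠ 0) :
    ∃ f' : Module.Dual 𝕂 V, ker f' = ker f ∧ f' ∘ₗ p = g := by
  have hspan : f ∘ₗ p ∈ span 𝕂 {g} := by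
    simpa using mem_span_of_iInf_ker_le_ker (L := fun _ : Unit => g) (by simpa using hker.le)
  obtain ⟨a, ha⟩ := mem_span_singleton.1 hspan
  have ha0 : a ≠ 0 := by
    rintro rfl
    rw [zero_smul] at ha
    exact hg (ker_eq_top.1 (by rw [hker, ← ha, ker_zero]))
  refine ⟨a⁻¹ • f, ker_smul f _ (inv_ne_zero ha0), ?_⟩
  rw [smul_comp, ← ha, smul_smul, inv_mul_cancel₀ ha0, one_smul]

lemma mem_span_image_of_sInf_le_ker {B : Set (Submodule 𝕂 V)} (hB : B.Finite)
    {α : Submodule 𝕂 V → Module.Dual 𝕂 V} (hα : IsDefiningForms B α) {γ : Module.Dual 𝕂 V}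
    (h : sInf B ≤ ker γ) : γ ∈ span 𝕂 (α '' B) := by
  have := hB.to_subtype
  rw [Set.image_eq_range]
  refine mem_span_of_iInf_ker_le_ker ?_
  rwa [iInf_congr fun H : B => hα H H.2, ← sInf_eq_iInf']

end RelationSpaces

section Restriction

variable {𝕂 : Type*} [Field 𝕂] {V : Type*} [AddCommGroup V] [Module 𝕂 V] (Z : Submodule 𝕂 V)

open Classical in
noncomputable def restrRel : (Submodule 𝕂 V →₀ 𝕂) →ₗ[𝕂] (Submodule 𝕂 Z →₀ 𝕂) :=
  lmapDomain 𝕂 𝕂 (fun H => (Z ⊓ H).comap Z.subtype) ∘ₗ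
    (supported 𝕂 𝕂 {H | ¬ Z ≤ H}).subtype ∘ₗ restrictDom 𝕂 𝕂 {H | ¬ Z ≤ H}

lemma restrRel_single_of_le {H : Submodule 𝕂 V} (hZH : Z ≤ H) (a : 𝕂) :
    restrRel Z (single H a) = 0 := by
  simp [restrRel, hZH]

lemma restrRel_single_of_not_le {H : Submodule 𝕂 V} (hZH : ¬ Z ≤ H) (a : 𝕂) :
    restrRel Z (single H a) = single ((Z ⊓ H).comap Z.subtype) a := by
  simp [restrRel, hZH]

lemma card_support_restrRel_le (c : Submodule 𝕂 V →₀ 𝕂) :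
    (restrRel Z c).support.card ≤ c.support.card := by
  classical
  calc (restrRel Z c).support.card
      ≤ ((c.filter fun H => ¬ Z ≤ H).support.image fun H => (Z ⊓ H).comap Z.subtype).card :=
        Finset.card_le_card mapDomain_support
    _ ≤ c.support.card :=
        Finset.card_image_le.trans (Finset.card_le_card (Finset.filter_subset _ _))

lemma map_restrRel_supported (A : Set (Submodule 𝕂 V)) :
    (supported 𝕂 𝕂 A).map (restrRel Z) = supported 𝕂 𝕂 (restr A Z) := by
  rw [supported_eq_span_single, supported_eq_span_single, Submodule.map_span]
  refine le_antisymm (span_le.2 ?_) (span_le.2 ?_)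
  · rintro _ ⟨_, ⟨H, hH, rfl⟩, rfl⟩
    by_cases hZH : Z ≤ H
    · simp [restrRel_single_of_le Z hZH]
    · rw [restrRel_single_of_not_le Z hZH]
      exact subset_span ⟨_, ⟨H, hH, hZH, rfl⟩, rfl⟩
  · rintro _ ⟨_, ⟨H, hH, hZH, rfl⟩, rfl⟩
    exact subset_span ⟨single H 1, ⟨H, hH, rfl⟩, restrRel_single_of_not_le Z hZH 1⟩

lemma restr_sInf_self_eq_empty (B : Set (Submodule 𝕂 V)) : restr B (sInf B) = ∅ :=
  Set.eq_empty_iff_forall_notMem.2 fun _ ⟨_, hH, hle, _⟩ => hle (sInf_le hH)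

variable {Z} {A : Set (Submodule 𝕂 V)} {α : Submodule 𝕂 V → Module.Dual 𝕂 V}
  {β : Submodule 𝕂 Z → Module.Dual 𝕂 Z}

lemma exists_isDefiningForms_comp_subtype_eq (hA : ∀ H ∈ A, IsHyperplane H)
    (hβ : IsDefiningForms (restr A Z) β) :
    ∃ α : Submodule 𝕂 V → Module.Dual 𝕂 V, IsDefiningForms A α ∧
      ∀ H ∈ A, ¬ Z ≤ H → α H ∘ₗ Z.subtype = β ((Z ⊓ H).comap Z.subtype) := by
  have hforms : ∀ H ∈ A, ∃ f : Module.Dual 𝕂 V,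
      ker f = H ∧ (¬ Z ≤ H → f ∘ₗ Z.subtype = β ((Z ⊓ H).comap Z.subtype)) := by
    intro H hH
    obtain ⟨f, -, hfH⟩ := hA H hH
    by_cases hZH : Z ≤ H
    · exact ⟨f, hfH, absurd hZH⟩
    have hkerβ := hβ _ ⟨H, hH, hZH, rfl⟩
    have hker : ker (β ((Z ⊓ H).comap Z.subtype)) = ker (f ∘ₗ Z.subtype) := by
      rw [hkerβ, ker_comp, hfH, comap_inf, comap_subtype_self, top_inf_eq]
    have hne : β ((Z ⊓ H).comap Z.subtype) ≠ 0 := fun h0 => by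
      rw [h0, ker_zero, eq_comm, comap_subtype_eq_top, le_inf_iff] at hkerβ
      exact hZH hkerβ.2
    obtain ⟨f', hf'H, hf'Z⟩ := exists_ker_eq_and_comp_eq Z.subtype hker hne
    exact ⟨f', hf'H.trans hfH, fun _ => hf'Z⟩
  choose! α hα using hforms
  exact ⟨α, fun H hH => (hα H hH).1, fun H hH => (hα H hH).2⟩

lemma dualMap_linearCombination_eq (hα : IsDefiningForms A α)
    (hαβ : ∀ H ∈ A, ¬ Z ≤ H → α H ∘ₗ Z.subtype = β ((Z ⊓ H).comap Z.subtype))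
    {c : Submodule 𝕂 V →₀ 𝕂} (hc : c ∈ supported 𝕂 𝕂 A) :
    Z.subtype.dualMap (linearCombination 𝕂 α c) = linearCombination 𝕂 β (restrRel Z c) := by
  rw [supported_eq_span_single] at hc
  refine eqOn_span' (f := Z.subtype.dualMap ∘ₗ linearCombination 𝕂 α)
    (g := linearCombination 𝕂 β ∘ₗ restrRel Z) ?_ hc
  rintro _ ⟨H, hH, rfl⟩
  by_cases hZH : Z ≤ H
  · ext z
    have hz : (z : V) ∈ ker (α H) := (hα H hH).symm ▸ hZH z.2
    simpa [restrRel_single_of_le Z hZH] using hz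
  · simp [restrRel_single_of_not_le Z hZH, dualMap_apply', hαβ H hH hZH]

lemma restrRel_mem_relSpace (hα : IsDefiningForms A α)
    (hαβ : ∀ H ∈ A, ¬ Z ≤ H → α H ∘ₗ Z.subtype = β ((Z ⊓ H).comap Z.subtype))
    {c : Submodule 𝕂 V →₀ 𝕂} (hc : c ∈ relSpace A α) : restrRel Z c ∈ relSpace (restr A Z) β :=
  ⟨map_restrRel_supported Z A ▸ mem_map_of_mem hc.1, by
    show linearCombination 𝕂 β (restrRel Z c) = 0
    rw [← dualMap_linearCombination_eq hα hαβ hc.1, mem_ker.1 hc.2, map_zero]⟩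

lemma relSpace_restr_le_map (hA : A.Finite) (hZ : Z ∈ interLattice A) (hα : IsDefiningForms A α)
    (hαβ : ∀ H ∈ A, ¬ Z ≤ H → α H ∘ₗ Z.subtype = β ((Z ⊓ H).comap Z.subtype)) :
    relSpace (restr A Z) β ≤ (relSpace A α).map (restrRel Z) := by
  rintro _ ⟨hcA, hcker⟩
  rw [← map_restrRel_supported] at hcA
  obtain ⟨r, hrA, rfl⟩ := hcA
  obtain ⟨B, hBA, rfl⟩ := hZ
  have hγ : sInf B ≤ ker (linearCombination 𝕂 α r) := fun z hz => by
    have := congr($(dualMap_linearCombination_eq hα hαβ hrA) ⟨z, hz⟩)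
    simpa [mem_ker.1 hcker] using this
  obtain ⟨d, hdB, hd⟩ := (mem_span_image_iff_linearCombination 𝕂).1
    (mem_span_image_of_sInf_le_ker (hA.subset hBA) (fun H hH => hα H (hBA hH)) hγ)
  have hd0 : restrRel (sInf B) d = 0 := by
    simpa [map_restrRel_supported, restr_sInf_self_eq_empty] using mem_map_of_mem (f := restrRel (sInf B)) hdB
  exact ⟨r - d, ⟨sub_mem hrA (supported_mono hBA hdB), by simp [hd]⟩, by simp [hd0]⟩

end Restriction

/-- **Formality is hereditary** (Theorem 2 / `thm:restriction-formal`):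
if `A` is a formal central arrangement in `V = 𝕂^ℓ` and `Z ∈ L(A)`,
then the restriction `A^Z` is a formal arrangement in `Z`. -/
theorem formality_is_hereditary {𝕂 : Type*} [Field 𝕂] {ℓ : ℕ}
    (A : Set (Submodule 𝕂 (Fin ℓ → 𝕂))) (hA : IsArrangement A) (hformal : IsFormal A)
    (Z : Submodule 𝕂 (Fin ℓ → 𝕂)) (hZ : Z ∈ interLattice A) :
    IsFormal (restr A Z) := by
  intro β hβ
  obtain ⟨α, hα, hαβ⟩ := exists_isDefiningForms_comp_subtype_eq hA.2 hβ
  exact relSpace2_eq_relSpace_of_le_map (restrRel Z) (fun _ => restrRel_mem_relSpace hα hαβ)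
    (card_support_restrRel_le Z) (relSpace_restr_le_map hA.1 hZ hα hαβ) (hformal α hα)
end

section
/- Let A be a central arrangement of rank r and let X ∈ L(A) have rank r−1. Then X is modular if and only if for any two distinct hyperplanes H_1, H_2 ∈ A ∖ A_X there exists H_3 ∈ A_X such that r(H_1 ∩ H_2 ∩ H_3) = 2, i.e. H_1, H_2, H_3 are linearly dependent. -/
open Submodule

section RkHelpers

open Module

variable {𝕂 : Type*} [Field 𝕂] {V : Type*} [AddCommGroup V] [Module 𝕂 V]
  [FiniteDimensional 𝕂 V]

lemma rk_add_finrank (W : Submodule 𝕂 V) :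
    rk W + Module.finrank 𝕂 W = Module.finrank 𝕂 V :=
  Submodule.finrank_quotient_add_finrank W

lemma rk_top : rk (⊤ : Submodule 𝕂 V) = 0 := by
  have h := rk_add_finrank (⊤ : Submodule 𝕂 V)
  rw [finrank_top] at h
  omega

lemma rk_anti {W W' : Submodule 𝕂 V} (h : W ≤ W') : rk W' ≤ rk W := by
  have h1 := rk_add_finrank W
  have h2 := rk_add_finrank W'
  have h3 := Submodule.finrank_mono h
  omega

lemma rk_strict_anti {W W' : Submodule 𝕂 V} (h : W < W') : rk W' < rk W := by
  have h1 := rk_add_finrank W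
  have h2 := rk_add_finrank W'
  have h3 := Submodule.finrank_lt_finrank_of_lt h
  omega

lemma eq_of_le_of_rk_le {W W' : Submodule 𝕂 V} (h : W ≤ W') (h2 : rk W ≤ rk W') : W = W' := by
  refine Submodule.eq_of_le_of_finrank_le h ?_
  have h1 := rk_add_finrank W
  have h1' := rk_add_finrank W'
  omega

lemma rk_hyperplane {H : Submodule 𝕂 V} (hH : IsHyperplane H) : rk H = 1 := by
  obtain ⟨f, hf, rfl⟩ := hH
  have h2 := Module.Dual.finrank_ker_add_one_of_ne_zero hf
  have h1 := rk_add_finrank (LinearMap.ker f)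
  omega

lemma rk_inf_le (W W' : Submodule 𝕂 V) : rk (W ⊓ W') ≤ rk W + rk W' := by
  have h := Submodule.finrank_sup_add_finrank_inf_eq W W'
  have h1 := rk_add_finrank W
  have h2 := rk_add_finrank W'
  have h3 := rk_add_finrank (W ⊓ W')
  have h4 := rk_add_finrank (W ⊔ W')
  have h5 := Submodule.finrank_le (W ⊔ W')
  omega

lemma rk_inf_hyperplanes {H₁ H₂ : Submodule 𝕂 V} (h1 : IsHyperplane H₁)
    (h2 : IsHyperplane H₂) (hne : H₁ ≠ H₂) : rk (H₁ ⊓ H₂) = 2 := by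
  have e1 := rk_hyperplane h1
  have e2 := rk_hyperplane h2
  have hle := rk_inf_le H₁ H₂
  have hne' : H₁ ⊓ H₂ ≠ H₁ := by
    intro heq
    have hle12 : H₁ ≤ H₂ := le_of_eq_of_le heq.symm inf_le_right
    exact hne (eq_of_le_of_rk_le hle12 (by omega))
  have hlt : H₁ ⊓ H₂ < H₁ := lt_of_le_of_ne inf_le_left hne'
  have := rk_strict_anti hlt
  omega

lemma rk_sInf_le_card (C : Finset (Submodule 𝕂 V)) (hC : ∀ H ∈ C, IsHyperplane H) :
    rk (sInf (↑C : Set (Submodule 𝕂 V))) ≤ C.card := by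
  classical
  induction C using Finset.induction_on with
  | empty => simp [rk_top]
  | @insert a s ha ih =>
    rw [Finset.coe_insert, sInf_insert, Finset.card_insert_of_notMem ha]
    have h1 : rk a = 1 := rk_hyperplane (hC a (Finset.mem_insert_self a s))
    have h2 := ih (fun H hH => hC H (Finset.mem_insert_of_mem hH))
    have h3 := rk_inf_le a (sInf (↑s : Set (Submodule 𝕂 V)))
    omega

lemma exists_min_gen (B : Finset (Submodule 𝕂 V)) :
    ∃ C : Finset (Submodule 𝕂 V), C ⊆ B ∧
      sInf (↑C : Set (Submodule 𝕂 V)) = sInf (↑B : Set (Submodule 𝕂 V)) ∧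
      C.card ≤ rk (sInf (↑B : Set (Submodule 𝕂 V))) := by
  classical
  induction B using Finset.induction_on with
  | empty => exact ⟨∅, Finset.Subset.refl _, rfl, by simp [rk_top]⟩
  | @insert a s ha ih =>
    obtain ⟨C', hC'sub, hC'inf, hC'card⟩ := ih
    rw [Finset.coe_insert, sInf_insert]
    by_cases hle : sInf (↑s : Set (Submodule 𝕂 V)) ≤ a
    · refine ⟨C', hC'sub.trans (Finset.subset_insert a s), ?_, ?_⟩
      · rw [hC'inf, inf_eq_right.mpr hle]
      · rw [inf_eq_right.mpr hle]; exact hC'card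
    · have hlt : a ⊓ sInf (↑s : Set (Submodule 𝕂 V)) < sInf (↑s : Set (Submodule 𝕂 V)) :=
        lt_of_le_of_ne inf_le_right (fun h => hle (le_of_eq_of_le h.symm inf_le_left))
      have hrk := rk_strict_anti hlt
      refine ⟨insert a C', Finset.insert_subset_insert a hC'sub, ?_, ?_⟩
      · rw [Finset.coe_insert, sInf_insert, hC'inf]
      · have hcard := Finset.card_insert_le a C'
        omega

end RkHelpers

/-- An element `X ∈ L(A)` is modular if `X + Y ∈ L(A)` for every `Y ∈ L(A)`. -/
def IsModular {𝕂 : Type*} [Field 𝕂] {V : Type*} [AddCommGroup V] [Module 𝕂 V]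
    (A : Set (Submodule 𝕂 V)) (X : Submodule 𝕂 V) : Prop :=
  ∀ Y ∈ interLattice A, X ⊔ Y ∈ interLattice A

/-- **Lemma 2.1** (`lem:modular1`): let `A` be a central arrangement of rank `r` and let
`X ∈ L(A)` have rank `r - 1`.  Then `X` is modular if and only if for any two distinct
hyperplanes `H₁, H₂ ∈ A ∖ A_X` there is an `H₃ ∈ A_X` with `r(H₁ ∩ H₂ ∩ H₃) = 2`,
i.e. `H₁, H₂, H₃` are linearly dependent. -/
theorem modular_corank_one_iff {𝕂 : Type*} [Field 𝕂] {ℓ : ℕ}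
    (A : Set (Submodule 𝕂 (Fin ℓ → 𝕂))) (hA : IsArrangement A)
    (r : ℕ) (hr : rk (sInf A) = r)
    (X : Submodule 𝕂 (Fin ℓ → 𝕂)) (hX : X ∈ interLattice A) (hrkX : rk X = r - 1) :
    IsModular A X ↔
      ∀ H₁ ∈ A \ locz A X, ∀ H₂ ∈ A \ locz A X, H₁ ≠ H₂ →
        ∃ H₃ ∈ locz A X, rk (H₁ ⊓ H₂ ⊓ H₃) = 2 := by
  classical
  constructor
  · -- forward direction
    intro hmod H₁ h₁ H₂ h₂ hne
    obtain ⟨h₁A, h₁n⟩ := h₁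
    obtain ⟨h₂A, h₂n⟩ := h₂
    have hyp₁ := hA.2 H₁ h₁A
    have hyp₂ := hA.2 H₂ h₂A
    have hYL : H₁ ⊓ H₂ ∈ interLattice A :=
      ⟨{H₁, H₂}, Set.pair_subset h₁A h₂A, (sInf_pair).symm⟩
    obtain ⟨B, hBsub, hBeq⟩ := hmod (H₁ ⊓ H₂) hYL
    have hrkY : rk (H₁ ⊓ H₂) = 2 := rk_inf_hyperplanes hyp₁ hyp₂ hne
    have hTle : sInf A ≤ H₁ ⊓ H₂ := le_inf (sInf_le h₁A) (sInf_le h₂A)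
    have hr2 : 2 ≤ r := by
      have := rk_anti hTle
      omega
    obtain ⟨BX, hBXsub, hBXeq⟩ := hX
    have hTleX : sInf A ≤ X := by rw [hBXeq]; exact sInf_le_sInf hBXsub
    have hTleXY : sInf A ≤ X ⊓ (H₁ ⊓ H₂) := le_inf hTleX hTle
    have hXYr : rk (X ⊓ (H₁ ⊓ H₂)) ≤ r := by
      have := rk_anti hTleXY
      omega
    have hsum := Submodule.finrank_sup_add_finrank_inf_eq X (H₁ ⊓ H₂)
    have e1 := rk_add_finrank X
    have e2 := rk_add_finrank (H₁ ⊓ H₂)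
    have e3 := rk_add_finrank (X ⊔ (H₁ ⊓ H₂))
    have e4 := rk_add_finrank (X ⊓ (H₁ ⊓ H₂))
    have hZ1 : 1 ≤ rk (X ⊔ (H₁ ⊓ H₂)) := by omega
    have hBne : B.Nonempty := by
      rcases Set.eq_empty_or_nonempty B with rfl | h
      · exfalso
        rw [sInf_empty] at hBeq
        rw [hBeq, rk_top] at hZ1
        omega
      · exact h
    obtain ⟨H₃, hH₃B⟩ := hBne
    have hZle : X ⊔ (H₁ ⊓ H₂) ≤ H₃ := by rw [hBeq]; exact sInf_le hH₃B
    refine ⟨H₃, ⟨hBsub hH₃B, le_trans le_sup_left hZle⟩, ?_⟩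
    have hYH₃ : H₁ ⊓ H₂ ≤ H₃ := le_trans le_sup_right hZle
    rw [inf_eq_left.mpr hYH₃, hrkY]
  · -- reverse direction
    intro hcond Y hY
    by_cases hXY : X ≤ Y
    · rw [sup_eq_right.mpr hXY]; exact hY
    by_cases hYX : Y ≤ X
    · rw [sup_eq_left.mpr hYX]; exact hX
    obtain ⟨B, hBsub, hBeq⟩ := hY
    have hBfin : B.Finite := hA.1.subset hBsub
    obtain ⟨C, hCsub, hCeq, hCcard⟩ := exists_min_gen hBfin.toFinset
    have hBFc : (↑hBfin.toFinset : Set (Submodule 𝕂 (Fin ℓ → 𝕂))) = B := hBfin.coe_toFinset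
    have hYC : Y = sInf (↑C : Set (Submodule 𝕂 (Fin ℓ → 𝕂))) := by
      rw [hCeq, hBFc, ← hBeq]
    have hcardC : C.card ≤ rk Y := by
      rwa [hBFc, ← hBeq] at hCcard
    have hCA : (↑C : Set (Submodule 𝕂 (Fin ℓ → 𝕂))) ⊆ A := by
      intro H hH
      exact hBsub (hBfin.mem_toFinset.mp (hCsub hH))
    -- choose H₁ ∈ C not containing X
    have hH₁ex : ∃ H₁ ∈ C, ¬ X ≤ H₁ := by
      by_contra h
      push_neg at h
      exact hXY (by rw [hYC]; exact le_sInf (fun b hb => h b hb))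
    obtain ⟨H₁, hH₁C, hH₁X⟩ := hH₁ex
    have hH₁A : H₁ ∈ A := hCA hH₁C
    have hH₁hyp := hA.2 H₁ hH₁A
    -- replacement hyperplanes
    have hrep : ∀ H ∈ C.erase H₁, ∃ K, K ∈ A ∧ X ≤ K ∧ H₁ ⊓ H ≤ K ∧ H₁ ⊓ K ≤ H := by
      intro H hH
      have hHC : H ∈ C := Finset.mem_of_mem_erase hH
      have hHne : H ≠ H₁ := Finset.ne_of_mem_erase hH
      have hHA : H ∈ A := hCA hHC
      by_cases hXH : X ≤ H
      · exact ⟨H, hHA, hXH, inf_le_right, inf_le_right⟩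
      · obtain ⟨H₃, hH₃loc, hH₃rk⟩ :=
          hcond H₁ ⟨hH₁A, fun hc => hH₁X hc.2⟩ H ⟨hHA, fun hc => hXH hc.2⟩
            (fun h => hHne h.symm)
        obtain ⟨hH₃A, hXH₃⟩ := hH₃loc
        have hHhyp := hA.2 H hHA
        have hH₃hyp := hA.2 H₃ hH₃A
        have hrk12 : rk (H₁ ⊓ H) = 2 :=
          rk_inf_hyperplanes hH₁hyp hHhyp (fun h => hHne h.symm)
        have heq : H₁ ⊓ H ⊓ H₃ = H₁ ⊓ H :=
          eq_of_le_of_rk_le inf_le_left (by rw [hH₃rk, hrk12])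
        have hle3 : H₁ ⊓ H ≤ H₃ := le_of_eq_of_le heq.symm inf_le_right
        have hne13 : H₁ ≠ H₃ := fun h => hH₁X (h ▸ hXH₃)
        have hrk13 : rk (H₁ ⊓ H₃) = 2 := rk_inf_hyperplanes hH₁hyp hH₃hyp hne13
        have heq2 : H₁ ⊓ H₃ = H₁ ⊓ H := by
          have hle : H₁ ⊓ H ≤ H₁ ⊓ H₃ := le_inf inf_le_left hle3
          exact (eq_of_le_of_rk_le hle (by omega)).symm
        exact ⟨H₃, hH₃A, hXH₃, hle3, le_of_eq_of_le heq2 inf_le_right⟩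
    choose! φ hφ1 hφ2 hφ3 hφ4 using hrep
    set C' := (C.erase H₁).image φ with hC'def
    set Z := sInf (↑C' : Set (Submodule 𝕂 (Fin ℓ → 𝕂))) with hZdef
    have hC'A : (↑C' : Set (Submodule 𝕂 (Fin ℓ → 𝕂))) ⊆ A := by
      intro K hK
      obtain ⟨H, hH, rfl⟩ := Finset.mem_image.mp hK
      exact hφ1 H hH
    have hXZ : X ≤ Z := by
      apply le_sInf
      intro K hK
      obtain ⟨H, hH, rfl⟩ := Finset.mem_image.mp hK
      exact hφ2 H hH
    have hYle : Y ≤ Z := by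
      apply le_sInf
      intro K hK
      obtain ⟨H, hH, rfl⟩ := Finset.mem_image.mp hK
      have hY1 : Y ≤ H₁ := by rw [hYC]; exact sInf_le (Finset.mem_coe.mpr hH₁C)
      have hY2 : Y ≤ H := by
        rw [hYC]; exact sInf_le (Finset.mem_coe.mpr (Finset.mem_of_mem_erase hH))
      exact (le_inf hY1 hY2).trans (hφ3 H hH)
    have hYeq : Y = H₁ ⊓ Z := by
      apply le_antisymm
      · exact le_inf (by rw [hYC]; exact sInf_le (Finset.mem_coe.mpr hH₁C)) hYle
      · rw [hYC]
        apply le_sInf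
        intro H hH
        have hHC : H ∈ C := Finset.mem_coe.mp hH
        by_cases h : H = H₁
        · subst h; exact inf_le_left
        · have hHe : H ∈ C.erase H₁ := Finset.mem_erase.mpr ⟨h, hHC⟩
          have hZφ : Z ≤ φ H :=
            sInf_le (Finset.mem_coe.mpr (Finset.mem_image_of_mem φ hHe))
          exact (inf_le_inf_left H₁ hZφ).trans (hφ4 H hHe)
    have hC'hyp : ∀ K ∈ C', IsHyperplane K :=
      fun K hK => hA.2 K (hC'A (Finset.mem_coe.mpr hK))
    have hrkZ : rk Z ≤ C'.card := rk_sInf_le_card C' hC'hyp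
    have hcard' : C'.card ≤ C.card - 1 := by
      have h1 := Finset.card_image_le (s := C.erase H₁) (f := φ)
      rw [Finset.card_erase_of_mem hH₁C] at h1
      exact h1
    have hYhyp : rk Y ≤ 1 + rk Z := by
      have h1 := rk_inf_le H₁ Z
      have h2 := rk_hyperplane hH₁hyp
      rw [hYeq]
      omega
    have hlt : rk (X ⊔ Y) < rk Y := by
      have hYlt : Y < X ⊔ Y :=
        lt_of_le_of_ne le_sup_right (fun h => hXY (le_sup_left.trans h.ge))
      exact rk_strict_anti hYlt
    have hsub : X ⊔ Y ≤ Z := sup_le hXZ hYle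
    have hZle2 : rk Z ≤ rk (X ⊔ Y) := rk_anti hsub
    have h1C : 1 ≤ C.card := Finset.card_pos.mpr ⟨H₁, hH₁C⟩
    have hfinal : X ⊔ Y = Z := eq_of_le_of_rk_le hsub (by omega)
    exact ⟨↑C', hC'A, hfinal⟩
end

section
/- Let A be a central arrangement of rank r and suppose X ∈ L(A) is modular of rank q. Then there exists a complementary intersection Y ∈ L(A) of rank r−q with X ∩ Y = T(A), such that the quotient map Y/T(A) → V/X, v + T(A) ↦ v + X, is a linear isomorphism carrying the arrangement A^Y/T(A) in Y/T(A) onto the arrangement A_X/X in V/X; in particular the arrangements (A_X/X, V/X) and (A^Y/T(A), Y/T(A)) are linearly isomorphic. -/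
open Submodule

open Submodule

section Aux

variable {𝕂 : Type*} [Field 𝕂] {V : Type*} [AddCommGroup V] [Module 𝕂 V]

lemma top_mem_interLattice' (A : Set (Submodule 𝕂 V)) : ⊤ ∈ interLattice A :=
  ⟨∅, by simp, by simp⟩

lemma sInf_le_of_mem_interLattice' {A : Set (Submodule 𝕂 V)} {Z : Submodule 𝕂 V}
    (h : Z ∈ interLattice A) : sInf A ≤ Z := by
  obtain ⟨B, hB, rfl⟩ := h; exact sInf_le_sInf hB

lemma inf_mem_interLattice' {A : Set (Submodule 𝕂 V)} {Z H : Submodule 𝕂 V}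
    (hZ : Z ∈ interLattice A) (hH : H ∈ A) : Z ⊓ H ∈ interLattice A := by
  obtain ⟨B, hB, rfl⟩ := hZ
  exact ⟨insert H B, Set.insert_subset hH hB, by rw [sInf_insert, inf_comm]⟩

lemma IsHyperplane.ne_top' {H : Submodule 𝕂 V} (hH : IsHyperplane H) : H ≠ ⊤ := by
  obtain ⟨f, hf, rfl⟩ := hH
  simpa [LinearMap.ker_eq_top] using hf

lemma finrank_inf_hyperplane' [FiniteDimensional 𝕂 V] {W H : Submodule 𝕂 V}
    (hH : IsHyperplane H) (hWH : ¬ W ≤ H) :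
    Module.finrank 𝕂 ↥(W ⊓ H) + 1 = Module.finrank 𝕂 ↥W := by
  obtain ⟨f, hf, rfl⟩ := hH
  set g : ↥W →ₗ[𝕂] 𝕂 := f ∘ₗ W.subtype with hg
  have hker : LinearMap.ker g = (W ⊓ LinearMap.ker f).comap W.subtype := by
    rw [hg, LinearMap.ker_comp, Submodule.comap_inf, Submodule.comap_subtype_self, top_inf_eq]
  obtain ⟨x, hxW, hxH⟩ := SetLike.not_le_iff_exists.1 hWH
  have hgx : g ⟨x, hxW⟩ ≠ 0 := by simpa [hg] using hxH
  have hrange : LinearMap.range g = ⊤ := by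
    rw [eq_top_iff]
    intro c _
    refine ⟨(c / (g ⟨x, hxW⟩)) • ⟨x, hxW⟩, ?_⟩
    rw [map_smul, smul_eq_mul, div_mul_cancel₀ _ hgx]
  have hrn := LinearMap.finrank_range_add_finrank_ker g
  rw [hrange, finrank_top, Module.finrank_self, hker] at hrn
  have hequiv := (Submodule.comapSubtypeEquivOfLe
      (inf_le_left : W ⊓ LinearMap.ker f ≤ W)).finrank_eq
  omega

lemma IsHyperplane.finrank_add_one' [FiniteDimensional 𝕂 V] {H : Submodule 𝕂 V}
    (hH : IsHyperplane H) : Module.finrank 𝕂 ↥H + 1 = Module.finrank 𝕂 V := by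
  have h := finrank_inf_hyperplane' hH (fun hle => hH.ne_top' (top_le_iff.1 hle))
  rwa [top_inf_eq, finrank_top] at h

lemma mem_of_interLattice_finrank' [FiniteDimensional 𝕂 V] {A : Set (Submodule 𝕂 V)}
    (hA : ∀ H ∈ A, IsHyperplane H) {Z : Submodule 𝕂 V} (hZ : Z ∈ interLattice A)
    (hrk : Module.finrank 𝕂 ↥Z + 1 = Module.finrank 𝕂 V) : Z ∈ A := by
  obtain ⟨B, hB, rfl⟩ := hZ
  rcases B.eq_empty_or_nonempty with rfl | ⟨H, hH⟩
  · rw [sInf_empty, finrank_top] at hrk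
    omega
  · have hHA := hB hH
    have h1 := (hA H hHA).finrank_add_one'
    have hle : sInf B ≤ H := sInf_le hH
    have := Submodule.eq_of_le_of_finrank_eq hle (by omega)
    rwa [this]

lemma map_mkQ_sup_self' (X W : Submodule 𝕂 V) :
    Submodule.map X.mkQ (X ⊔ W) = Submodule.map X.mkQ W := by
  rw [Submodule.map_sup]
  have hbot : Submodule.map X.mkQ X = ⊥ := by
    rw [eq_bot_iff]
    rintro _ ⟨x, hx, rfl⟩
    simpa [Submodule.mkQ_apply, Submodule.Quotient.mk_eq_zero] using hx
  rw [hbot, bot_sup_eq]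

end Aux


/-- **Lemma 2.2** (`lem:modular2`): let `A` be a central arrangement of rank `r` and
suppose `X ∈ L(A)` is modular of rank `q`.  Then there is a complementary intersection
`Y ∈ L(A)` of rank `r - q` with `X ∩ Y = T(A)`, such that the quotient map
`Y/T(A) → V/X`, `v + T(A) ↦ v + X` — i.e. the map `φ = mkQ_X ∘ incl_Y : Y → V/X`,
whose kernel is `T(A) ∩ Y` and which is surjective — is a linear isomorphism
`Y/T(A) ≅ V/X` carrying the arrangement `A^Y/T(A)` onto the arrangement `A_X/X`. -/
theorem modular_complement_isomorphic_arrangements {𝕂 : Type*} [Field 𝕂] {ℓ : ℕ}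
    (A : Set (Submodule 𝕂 (Fin ℓ → 𝕂))) (hA : IsArrangement A)
    (r q : ℕ) (hr : rk (sInf A) = r)
    (X : Submodule 𝕂 (Fin ℓ → 𝕂)) (hX : X ∈ interLattice A) (hq : rk X = q)
    (hmod : IsModular A X) :
    ∃ Y ∈ interLattice A, rk Y = r - q ∧ X ⊓ Y = sInf A ∧
      LinearMap.ker (X.mkQ ∘ₗ Y.subtype) = (sInf A).comap Y.subtype ∧
      Function.Surjective (X.mkQ ∘ₗ Y.subtype) ∧
      (Submodule.map (X.mkQ ∘ₗ Y.subtype)) '' restr A Y =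
        (Submodule.map X.mkQ) '' locz A X := by
  classical
  obtain ⟨hfin, hhyp⟩ := hA
  have hdim : Module.finrank 𝕂 (Fin ℓ → 𝕂) = ℓ := Module.finrank_fin_fun 𝕂
  -- choose Y minimal in L(A) with X ⊔ Y = ⊤
  have hwf : WellFoundedLT (Submodule 𝕂 (Fin ℓ → 𝕂)) := inferInstance
  obtain ⟨Y, ⟨hYL, hXY⟩, hmin⟩ := hwf.wf.has_min
      {Z | Z ∈ interLattice A ∧ X ⊔ Z = ⊤}
      ⟨⊤, top_mem_interLattice' A, sup_top_eq X⟩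
  -- X ⊓ Y = sInf A
  have hTle : sInf A ≤ X ⊓ Y :=
    le_inf (sInf_le_of_mem_interLattice' hX) (sInf_le_of_mem_interLattice' hYL)
  have hinf : X ⊓ Y = sInf A := by
    refine le_antisymm ?_ hTle
    by_contra hcon
    obtain ⟨H, hHA, hHnle⟩ : ∃ H ∈ A, ¬ X ⊓ Y ≤ H := by
      by_contra h; push_neg at h; exact hcon (le_sInf h)
    have hYnle : ¬ Y ≤ H := fun h => hHnle (le_trans inf_le_right h)
    have hYH := finrank_inf_hyperplane' (hhyp H hHA) hYnle
    have hXYH := finrank_inf_hyperplane' (hhyp H hHA) hHnle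
    have hsup1 := Submodule.finrank_sup_add_finrank_inf_eq X Y
    have hsup2 := Submodule.finrank_sup_add_finrank_inf_eq X (Y ⊓ H)
    rw [← inf_assoc] at hsup2
    rw [hXY, finrank_top] at hsup1
    have htop : X ⊔ (Y ⊓ H) = ⊤ :=
      Submodule.eq_top_of_finrank_eq (by omega)
    exact hmin (Y ⊓ H) ⟨inf_mem_interLattice' hYL hHA, htop⟩
      (lt_of_le_of_ne inf_le_left (fun h => hYnle (h ▸ inf_le_right)))
  -- dimension bookkeeping
  have e1 := Submodule.finrank_quotient_add_finrank (sInf A)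
  have e2 := Submodule.finrank_quotient_add_finrank X
  have e3 := Submodule.finrank_quotient_add_finrank Y
  have e4 := Submodule.finrank_sup_add_finrank_inf_eq X Y
  rw [hXY, finrank_top, hinf] at e4
  have hrkY : rk Y = r - q := by
    unfold rk at hr hq ⊢
    omega
  -- kernel
  have hker : LinearMap.ker (X.mkQ ∘ₗ Y.subtype) = (sInf A).comap Y.subtype := by
    rw [LinearMap.ker_comp, Submodule.ker_mkQ, ← hinf, Submodule.comap_inf,
      Submodule.comap_subtype_self, inf_top_eq]
  -- surjectivity
  have hmapY : Submodule.map X.mkQ Y = ⊤ := by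
    rw [← map_mkQ_sup_self' X Y, hXY, Submodule.map_top, Submodule.range_mkQ]
  have hsurj : Function.Surjective (X.mkQ ∘ₗ Y.subtype) := by
    rw [← LinearMap.range_eq_top, LinearMap.range_comp, Submodule.range_subtype, hmapY]
  -- image computation lemma
  have himg : ∀ H' : Submodule 𝕂 (Fin ℓ → 𝕂),
      Submodule.map (X.mkQ ∘ₗ Y.subtype) ((Y ⊓ H').comap Y.subtype)
        = Submodule.map X.mkQ (Y ⊓ H') := by
    intro H'
    rw [Submodule.map_comp, Submodule.map_comap_subtype, ← inf_assoc, inf_idem]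
  -- key rank computation
  have key : ∀ H' ∈ A, ¬ Y ≤ H' →
      Module.finrank 𝕂 ↥(X ⊔ (Y ⊓ H')) + 1 = ℓ := by
    intro H' hH'A hH'nle
    have hcut := finrank_inf_hyperplane' (hhyp H' hH'A) hH'nle
    have hsup := Submodule.finrank_sup_add_finrank_inf_eq X (Y ⊓ H')
    have hXinf : X ⊓ (Y ⊓ H') = sInf A := by
      rw [← inf_assoc, hinf, inf_eq_left.2 (sInf_le hH'A)]
    rw [hXinf] at hsup
    omega
  refine ⟨Y, hYL, hrkY, hinf, hker, hsurj, ?_⟩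
  ext z
  constructor
  · rintro ⟨K, ⟨H', hH'A, hH'nle, rfl⟩, rfl⟩
    refine ⟨X ⊔ (Y ⊓ H'), ⟨?_, le_sup_left⟩, ?_⟩
    · exact mem_of_interLattice_finrank' hhyp
        (hmod _ (inf_mem_interLattice' hYL hH'A))
        (by rw [hdim]; exact key H' hH'A hH'nle)
    · rw [map_mkQ_sup_self', himg]
  · rintro ⟨H, ⟨hHA, hXH⟩, rfl⟩
    have hYnle : ¬ Y ≤ H := by
      intro h
      exact (hhyp H hHA).ne_top' (top_le_iff.1 (hXY ▸ sup_le hXH h))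
    refine ⟨(Y ⊓ H).comap Y.subtype, ⟨H, hHA, hYnle, rfl⟩, ?_⟩
    have heq : X ⊔ (Y ⊓ H) = H := by
      have h1 := key H hHA hYnle
      have h2 := (hhyp H hHA).finrank_add_one'
      exact Submodule.eq_of_le_of_finrank_eq (sup_le hXH inf_le_right)
        (by rw [hdim] at h2; omega)
    rw [himg, ← map_mkQ_sup_self' X (Y ⊓ H), heq]
end

section
/- Let A be a simplicial real arrangement in ℝ^ℓ. Then for each chamber C ∈ C(A), the line closure of the set of walls of C equals all of A: lc(W^C) = A. -/
open Submodule

section LineClosure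

variable {𝕂 : Type*} [Field 𝕂] {V : Type*} [AddCommGroup V] [Module 𝕂 V]

/-- A subset `B` of the arrangement `A` is line-closed if for every pair
`H, H' ∈ B` one has `A_{H ∩ H'} ⊆ B`. -/
def IsLineClosed (A B : Set (Submodule 𝕂 V)) : Prop :=
  B ⊆ A ∧ ∀ H ∈ B, ∀ H' ∈ B, locz A (H ⊓ H') ⊆ B

/-- The line closure `lc(B)` of `B` in `A`: the intersection of all line-closed
subsets of `A` containing `B`. -/
def lineClosure (A B : Set (Submodule 𝕂 V)) : Set (Submodule 𝕂 V) :=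
  ⋂₀ {C | IsLineClosed A C ∧ B ⊆ C}

end LineClosure

section Simplicial

variable {ℓ : ℕ}

/-- The complement of the union of the hyperplanes of `A` in `ℝ^ℓ`. -/
def hypComplement (A : Set (Submodule ℝ (Fin ℓ → ℝ))) : Set (Fin ℓ → ℝ) :=
  {x | ∀ H ∈ A, x ∉ H}

/-- The chambers of the real arrangement `A`: the connected components of the
complement of the union of its hyperplanes. -/
def chambers (A : Set (Submodule ℝ (Fin ℓ → ℝ))) : Set (Set (Fin ℓ → ℝ)) :=
  {C | ∃ x ∈ hypComplement A, C = connectedComponentIn (hypComplement A) x}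

/-- `A` is simplicial: every chamber is an open simplicial cone, i.e. the set of
strictly positive linear combinations of `ℓ` linearly independent vectors. -/
def IsSimplicial (A : Set (Submodule ℝ (Fin ℓ → ℝ))) : Prop :=
  ∀ C ∈ chambers A, ∃ v : Fin ℓ → (Fin ℓ → ℝ), LinearIndependent ℝ v ∧
    C = {x | ∃ c : Fin ℓ → ℝ, (∀ i, 0 < c i) ∧ x = ∑ i, c i • v i}

/-- The walls of a chamber `C`: the hyperplanes `H ∈ A` such that the linear span of
`cl(C) ∩ H` is all of `H`. -/
def walls (A : Set (Submodule ℝ (Fin ℓ → ℝ))) (C : Set (Fin ℓ → ℝ)) :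
    Set (Submodule ℝ (Fin ℓ → ℝ)) :=
  {H | H ∈ A ∧ Submodule.span ℝ (closure C ∩ ↑H) = H}

end Simplicial

/-!
Chambers are the sign classes of the complement of `A`, and a simplicial chamber is the open
positive cone of a basis whose coordinate hyperplanes are exactly its walls.

Let `B ⊇ W^C` be line-closed. Suppose the chambers `K` and `K'` are adjacent across the wall `Hs`
of `K` and the walls of `K'` lie in `B`. For any other wall `Hi` of `K`, the centre `z` of the
codimension-two face `cl K ∩ Hs ∩ Hi` lies in `cl K'` and on `Hi ≠ Hs`, so it also lies on a wall
`H₂ ≠ Hs` of `K'`. Every hyperplane of `A` through `z` contains the whole face, so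
`Hs ∩ Hi ⊆ H₂`, hence `Hs ∩ H₂ = Hs ∩ Hi` and `Hi ∈ A_{Hs ∩ H₂} ⊆ B`. By induction on the
number of hyperplanes separating a chamber from `C`, `B` contains the walls of every chamber; and
every `H ∈ A` is a wall of the chamber reached by pushing a generic point of `H` off `H`.
-/

open Module Set

section Hyperplanes

variable {𝕂 V : Type*} [Field 𝕂] [AddCommGroup V] [Module 𝕂 V]

theorem Module.Dual.exists_smul_eq_of_ker_le {f g : Dual 𝕂 V}
    (h : LinearMap.ker f ≤ LinearMap.ker g) : ∃ c : 𝕂, c • f = g := by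
  have : g ∈ span 𝕂 (range fun _ : Unit => f) := mem_span_of_iInf_ker_le_ker (by simpa using h)
  simpa [range_const, mem_span_singleton] using this

theorem Module.Dual.exists_add_eq_of_inf_ker_le {f g h : Dual 𝕂 V}
    (hle : LinearMap.ker f ⊓ LinearMap.ker g ≤ LinearMap.ker h) :
    ∃ a c : 𝕂, a • f + c • g = h := by
  have : h ∈ span 𝕂 (range fun b : Bool => cond b f g) :=
    mem_span_of_iInf_ker_le_ker (by simpa [iInf_bool_eq] using hle)
  have hrange : (range fun b : Bool => cond b f g) = {f, g} := by
    ext; simp [eq_comm, or_comm]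
  rwa [hrange, mem_span_pair] at this

/-- A defining form of `H`, chosen once and for all (a junk value when `H` is no hyperplane). -/
noncomputable def hypForm (H : Submodule 𝕂 V) : Dual 𝕂 V :=
  Classical.epsilon fun f => f ≠ 0 ∧ LinearMap.ker f = H

namespace IsHyperplane

variable {H H' H'' : Submodule 𝕂 V}

theorem hypForm_ne_zero (hH : IsHyperplane H) : hypForm H ≠ 0 :=
  (Classical.epsilon_spec hH).1

theorem ker_hypForm (hH : IsHyperplane H) : LinearMap.ker (hypForm H) = H :=
  (Classical.epsilon_spec hH).2

theorem mem_iff (hH : IsHyperplane H) {x : V} : x ∈ H ↔ hypForm H x = 0 := by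
  rw [← LinearMap.mem_ker, hH.ker_hypForm]

theorem ne_top (hH : IsHyperplane H) : H ≠ ⊤ := by
  rw [← hH.ker_hypForm, Ne, LinearMap.ker_eq_top]
  exact hH.hypForm_ne_zero

theorem eq_of_le (hH : IsHyperplane H) (hH' : IsHyperplane H') (hle : H ≤ H') : H = H' := by
  rw [← hH.ker_hypForm, ← hH'.ker_hypForm] at hle ⊢
  obtain ⟨c, hc⟩ := Dual.exists_smul_eq_of_ker_le hle
  have hc0 : c ≠ 0 := by
    rintro rfl
    exact hH'.hypForm_ne_zero (by rw [← hc, zero_smul])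
  rw [← hc, LinearMap.ker_smul _ _ hc0]

theorem inf_le_of_inf_le (hH : IsHyperplane H) (hH' : IsHyperplane H') (hH'' : IsHyperplane H'')
    (hle : H ⊓ H' ≤ H'') (hne : H'' ≠ H) : H ⊓ H'' ≤ H' := by
  rw [← hH.ker_hypForm, ← hH'.ker_hypForm, ← hH''.ker_hypForm] at hle
  obtain ⟨a, c, hac⟩ := Dual.exists_add_eq_of_inf_ker_le hle
  have hc : c ≠ 0 := by
    rintro rfl
    refine hne (hH.eq_of_le hH'' fun u hu => ?_).symm
    rw [hH''.mem_iff, ← hac, zero_smul, add_zero, LinearMap.smul_apply, hH.mem_iff.1 hu,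
      smul_zero]
  intro u ⟨hu, hu''⟩
  rw [SetLike.mem_coe, hH.mem_iff] at hu
  rw [SetLike.mem_coe, hH''.mem_iff, ← hac] at hu''
  simp only [LinearMap.add_apply, LinearMap.smul_apply, hu, smul_eq_mul, mul_zero, zero_add,
    mul_eq_zero, hc, false_or] at hu''
  exact hH'.mem_iff.2 hu''

end IsHyperplane

theorem IsArrangement.exists_mem_forall_eq_of_mem [Infinite 𝕂] {A : Set (Submodule 𝕂 V)}
    (hA : IsArrangement A) {H : Submodule 𝕂 V} (hH : H ∈ A) :
    ∃ p ∈ H, ∀ H' ∈ A, p ∈ H' → H' = H := by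
  by_contra! hcover
  have := hA.1.sdiff (t := {H}) |>.to_subtype
  obtain ⟨⟨H', hH'A, hH'H⟩, htop⟩ := Subspace.exists_eq_top_of_iUnion_eq_univ
    (p := fun H' : ↥(A \ {H}) => (H' : Submodule 𝕂 V).comap H.subtype) <| by
      refine eq_univ_of_forall fun p => mem_iUnion.2 ?_
      obtain ⟨H', hH'A, hp, hne⟩ := hcover p p.2
      exact ⟨⟨H', hH'A, hne⟩, hp⟩
  rw [comap_subtype_eq_top] at htop
  exact hH'H ((hA.2 H hH).eq_of_le (hA.2 H' hH'A) htop).symm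

theorem lineClosure_subset {A W : Set (Submodule 𝕂 V)} (hW : W ⊆ A) : lineClosure A W ⊆ A :=
  sInter_subset_of_mem ⟨⟨subset_rfl, fun _ _ _ _ _ h => h.1⟩, hW⟩

end Hyperplanes

theorem IsHyperplane.hypForm_mul_hypForm_neg {V : Type*} [AddCommGroup V] [Module ℝ V]
    {H : Submodule ℝ V} (hH : IsHyperplane H) {f : Dual ℝ V} (hf : LinearMap.ker f = H)
    {x y : V} (hxy : f x * f y < 0) : hypForm H x * hypForm H y < 0 := by
  obtain ⟨c, hc⟩ := Dual.exists_smul_eq_of_ker_le (hf.trans hH.ker_hypForm.symm).le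
  have hc0 : c ≠ 0 := by
    rintro rfl
    exact hH.hypForm_ne_zero (by rw [← hc, zero_smul])
  rw [← hc, LinearMap.smul_apply, LinearMap.smul_apply, smul_eq_mul, smul_eq_mul,
    mul_mul_mul_comm]
  exact mul_neg_of_pos_of_neg (mul_self_pos.2 hc0) hxy

section Signs

variable {a b c : ℝ}

theorem mul_pos_of_mul_pos_of_mul_pos (hab : 0 < a * b) (hbc : 0 < b * c) : 0 < a * c := by
  nlinarith [mul_pos hab hbc, sq_nonneg b]

theorem mul_nonneg_of_mul_pos_of_mul_nonneg (hab : 0 < a * b) (hac : 0 ≤ a * c) : 0 ≤ b * c := by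
  by_contra! h
  nlinarith [mul_pos hab (neg_pos.2 h), mul_nonneg hac (sq_nonneg b)]

end Signs

section BasisCoord

variable {ι R M : Type*} [Semiring R] [AddCommMonoid M] [Module R M] (b : Basis ι R M)

theorem Module.Basis.coord_sum_self [DecidableEq ι] (s : Finset ι) (i : ι) :
    b.coord i (∑ k ∈ s, b k) = if i ∈ s then 1 else 0 := by
  simp [Basis.coord_apply, map_sum, Basis.repr_self, Finsupp.single_apply]

theorem Module.Basis.mem_of_coord_ne_zero {p : Submodule R M} {u : M}
    (h : ∀ i, b.coord i u ≠ 0 → b i ∈ p) : u ∈ p :=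
  span_le.2 (by rintro _ ⟨i, hi, rfl⟩; exact h i (Finsupp.mem_support_iff.1 hi))
    (b.mem_span_repr_support u)

end BasisCoord

theorem Module.Basis.apply_eq_sum_coord {ι R M : Type*} [Fintype ι] [CommSemiring R]
    [AddCommMonoid M] [Module R M] (b : Basis ι R M) (f : M →ₗ[R] R) (u : M) :
    f u = ∑ j, b.coord j u * f (b j) := by
  conv_lhs => rw [← b.sum_repr u]
  simp only [map_sum, map_smul, smul_eq_mul, Basis.coord_apply]

section BasisHyperplane

variable {ι K V : Type*} [Field K] [AddCommGroup V] [Module K V] (b : Basis ι K V)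

theorem Module.Basis.isHyperplane_ker_coord (i : ι) : IsHyperplane (LinearMap.ker (b.coord i)) :=
  ⟨b.coord i, fun h => by simpa using congr($h (b i)), rfl⟩

theorem Module.Basis.ker_coord_injective :
    Function.Injective fun i => LinearMap.ker (b.coord i) := by
  classical
  intro i j (h : LinearMap.ker (b.coord i) = LinearMap.ker (b.coord j))
  by_contra hij
  have : b i ∈ LinearMap.ker (b.coord j) := by simp [Ne.symm hij]
  simp [← h] at this

end BasisHyperplane

section Cones

variable {ι V : Type*} [NormedAddCommGroup V] [NormedSpace ℝ V] [FiniteDimensional ℝ V]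

theorem closure_setOf_forall_pos {f : ι → Dual ℝ V} {x : V} (hx : ∀ i, 0 < f i x) :
    closure {u | ∀ i, 0 < f i u} = {u | ∀ i, 0 ≤ f i u} := by
  refine subset_antisymm (closure_minimal (fun u hu i => (hu i).le) ?_) fun z hz => ?_
  · simp only [ofPred_forall]
    exact isClosed_iInter fun i =>
      isClosed_le continuous_const (f i).continuous_of_finiteDimensional
  · have hseg : openSegment ℝ z x ⊆ {u | ∀ i, 0 < f i u} := by
      rintro _ ⟨s, t, hs, ht, -, rfl⟩ i
      simp only [map_add, map_smul, smul_eq_mul]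
      exact add_pos_of_nonneg_of_pos (mul_nonneg hs.le (hz i)) (mul_pos ht (hx i))
    exact closure_mono hseg (closure_openSegment (𝕜 := ℝ) z x ▸ left_mem_segment ℝ z x)

/-- The open simplicial cone of positive combinations of `b`, described by coordinates. -/
def openCone (b : Basis ι ℝ V) : Set V :=
  {u | ∀ i, 0 < b.coord i u}

variable [Fintype ι] (b : Basis ι ℝ V)

theorem closure_openCone : closure (openCone b) = {u | ∀ i, 0 ≤ b.coord i u} := by
  classical
  exact closure_setOf_forall_pos (x := ∑ k, b k) fun i => by simp

theorem sum_mem_closure_openCone (s : Finset ι) : ∑ k ∈ s, b k ∈ closure (openCone b) := by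
  classical
  rw [closure_openCone]
  intro i
  rw [Basis.coord_sum_self]
  split_ifs <;> norm_num

end Cones

section SignClasses

variable {ℓ : ℕ} {A : Set (Submodule ℝ (Fin ℓ → ℝ))} {x y : Fin ℓ → ℝ}

def signClass (A : Set (Submodule ℝ (Fin ℓ → ℝ))) (x : Fin ℓ → ℝ) : Set (Fin ℓ → ℝ) :=
  {y | ∀ H ∈ A, 0 < hypForm H x * hypForm H y}

theorem signClass_eq_of_mem (h : y ∈ signClass A x) : signClass A y = signClass A x := by
  ext z
  refine forall₂_congr fun H hH => ⟨fun hz => ?_, fun hz => ?_⟩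
  · exact mul_pos_of_mul_pos_of_mul_pos (h H hH) hz
  · exact mul_pos_of_mul_pos_of_mul_pos (mul_comm (hypForm H x) _ ▸ h H hH) hz

theorem convex_signClass : Convex ℝ (signClass A x) := by
  intro y hy z hz s t hs ht hst H hH
  have hyz : 0 < s * (hypForm H x * hypForm H y) + t * (hypForm H x * hypForm H z) := by
    rcases hs.eq_or_lt with rfl | hs
    · simpa [show t = 1 by linarith] using hz H hH
    · exact add_pos_of_pos_of_nonneg (mul_pos hs (hy H hH)) (mul_nonneg ht (hz H hH).le)
  simp only [map_add, map_smul, smul_eq_mul]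
  linarith

namespace IsArrangement

theorem mem_hypComplement_iff (hA : IsArrangement A) :
    x ∈ hypComplement A ↔ ∀ H ∈ A, hypForm H x ≠ 0 :=
  forall₂_congr fun H hH => not_congr (hA.2 H hH).mem_iff

theorem signClass_subset_hypComplement (hA : IsArrangement A) : signClass A x ⊆ hypComplement A :=
  fun y hy => hA.mem_hypComplement_iff.2 fun H hH h0 => by simpa [h0] using hy H hH

theorem self_mem_signClass (hA : IsArrangement A) (hx : x ∈ hypComplement A) : x ∈ signClass A x :=
  fun H hH => mul_self_pos.2 (hA.mem_hypComplement_iff.1 hx H hH)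

theorem isOpen_signClass (hA : IsArrangement A) : IsOpen (signClass A x) := by
  have : signClass A x = ⋂ H ∈ A, {y | 0 < hypForm H x * hypForm H y} := by
    ext; simp [signClass]
  rw [this]
  exact hA.1.isOpen_biInter fun H _ =>
    isOpen_lt continuous_const (continuous_const.mul (hypForm H).continuous_of_finiteDimensional)

theorem connectedComponentIn_hypComplement (hA : IsArrangement A) (hx : x ∈ hypComplement A) :
    connectedComponentIn (hypComplement A) x = signClass A x := by
  refine subset_antisymm ?_ (convex_signClass.isPreconnected.subset_connectedComponentIn
    (hA.self_mem_signClass hx) hA.signClass_subset_hypComplement)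
  -- the rest of the complement is the open set of points separated from `x` by some hyperplane
  have hopen : IsOpen (⋃ H ∈ A, {y | hypForm H x * hypForm H y < 0}) :=
    isOpen_biUnion fun H _ => isOpen_lt
      (continuous_const.mul (hypForm H).continuous_of_finiteDimensional) continuous_const
  refine isPreconnected_connectedComponentIn.subset_left_of_subset_union hA.isOpen_signClass
    hopen ?_ (fun y hy => ?_) ⟨x, mem_connectedComponentIn hx, hA.self_mem_signClass hx⟩
  · refine disjoint_left.2 fun y hy hy' => ?_
    obtain ⟨H, hH, hneg⟩ := mem_iUnion₂.1 hy'
    exact (hy H hH).not_gt hneg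
  · have hy' := hA.mem_hypComplement_iff.1 (connectedComponentIn_subset _ _ hy)
    by_contra! h
    simp only [mem_union, mem_iUnion₂, mem_ofPred_eq, not_or, not_exists, not_lt] at h
    obtain ⟨H, hH, hle⟩ : ∃ H ∈ A, hypForm H x * hypForm H y ≤ 0 := by
      simpa [signClass] using h.1
    exact mul_ne_zero (hA.mem_hypComplement_iff.1 hx H hH) (hy' H hH)
      (le_antisymm hle (h.2 H hH))

theorem closure_signClass (hA : IsArrangement A) (hx : x ∈ hypComplement A) :
    closure (signClass A x) = {z | ∀ H ∈ A, 0 ≤ hypForm H x * hypForm H z} := by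
  have := closure_setOf_forall_pos (x := x)
    (f := fun H : A => hypForm (H : Submodule ℝ (Fin ℓ → ℝ)) x • hypForm (H : Submodule ℝ _))
    fun H => hA.self_mem_signClass hx H H.2
  simpa [signClass, Subtype.forall] using this

theorem closure_signClass_inter_hypComplement (hA : IsArrangement A) (hx : x ∈ hypComplement A) :
    closure (signClass A x) ∩ hypComplement A ⊆ signClass A x := by
  rintro z ⟨hz, hz'⟩ H hH
  rw [hA.closure_signClass hx] at hz
  exact (hz H hH).lt_of_ne (mul_ne_zero (hA.mem_hypComplement_iff.1 hx H hH)
    (hA.mem_hypComplement_iff.1 hz' H hH)).symm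

end IsArrangement

end SignClasses

section SimplicialChambers

variable {ℓ : ℕ} {A : Set (Submodule ℝ (Fin ℓ → ℝ))} {y z : Fin ℓ → ℝ}
  {b : Basis (Fin ℓ) ℝ (Fin ℓ → ℝ)} {H : Submodule ℝ (Fin ℓ → ℝ)}

theorem IsSimplicial.exists_basis (hsimp : IsSimplicial A) {C : Set (Fin ℓ → ℝ)}
    (hC : C ∈ chambers A) : ∃ b : Basis (Fin ℓ) ℝ (Fin ℓ → ℝ), C = openCone b := by
  obtain ⟨v, hv, rfl⟩ := hsimp C hC
  let b := basisOfLinearIndependentOfCardEqFinrank' v hv (by simp)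
  have hb : ⇑b = v := Basis.coe_mk _ _
  refine ⟨b, ext fun u => ⟨?_, fun hu => ⟨fun i => b.coord i u, hu, ?_⟩⟩⟩
  · rintro ⟨c, hc, rfl⟩ i
    rw [← hb, Basis.coord_apply, b.repr_sum_self]
    exact hc i
  · simp [← hb, Basis.coord_apply]

namespace IsArrangement

theorem exists_basis_signClass (hA : IsArrangement A) (hsimp : IsSimplicial A)
    (hy : y ∈ hypComplement A) : ∃ b : Basis (Fin ℓ) ℝ (Fin ℓ → ℝ), signClass A y = openCone b :=
  hsimp.exists_basis ⟨y, hy, (hA.connectedComponentIn_hypComplement hy).symm⟩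

/-- A hyperplane of `A` through a point `z` of the closed chamber contains the face of `z`. -/
theorem mem_of_coord_eq_zero_imp (hA : IsArrangement A) (hy : y ∈ hypComplement A)
    (hb : signClass A y = openCone b) (hH : H ∈ A) (hz : z ∈ closure (openCone b)) (hzH : z ∈ H)
    {u : Fin ℓ → ℝ} (hu : ∀ j, b.coord j z = 0 → b.coord j u = 0) : u ∈ H := by
  refine b.mem_of_coord_ne_zero fun k hk => ?_
  set s := hypForm H y
  -- `hypForm H` has the sign `s` on all of the closed chamber, in particular on its edges `b j`
  have hedge : ∀ j, 0 ≤ b.coord j z * (s * hypForm H (b j)) := fun j => by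
    have hbj : b j ∈ closure (signClass A y) := hb ▸ by
      simpa using sum_mem_closure_openCone b {j}
    rw [hA.closure_signClass hy] at hbj
    rw [closure_openCone] at hz
    exact mul_nonneg (hz j) (hbj H hH)
  have hsum : ∑ j, b.coord j z * (s * hypForm H (b j)) = 0 := by
    rw [(hA.2 H hH).mem_iff, b.apply_eq_sum_coord] at hzH
    simp only [mul_left_comm _ s, ← Finset.mul_sum, hzH, mul_zero]
  have hk0 := (Finset.sum_eq_zero_iff_of_nonneg fun j _ => hedge j).1 hsum k (Finset.mem_univ k)
  rw [(hA.2 H hH).mem_iff]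
  exact (mul_eq_zero.1 ((mul_eq_zero.1 hk0).resolve_left fun h => hk (hu k h))).resolve_left
    (hA.mem_hypComplement_iff.1 hy H hH)

theorem eq_ker_coord_of_sum_mem (hA : IsArrangement A) (hy : y ∈ hypComplement A)
    (hb : signClass A y = openCone b) (hH : H ∈ A) (j : Fin ℓ)
    (hj : ∑ k ∈ Finset.univ.erase j, b k ∈ H) : LinearMap.ker (b.coord j) = H := by
  refine (b.isHyperplane_ker_coord j).eq_of_le (hA.2 H hH) fun u hu => ?_
  refine hA.mem_of_coord_eq_zero_imp hy hb hH (sum_mem_closure_openCone b _) hj fun k hk => ?_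
  rw [Basis.coord_sum_self] at hk
  obtain rfl : k = j := by simpa using hk
  exact hu

theorem ker_coord_mem (hA : IsArrangement A) (hy : y ∈ hypComplement A)
    (hb : signClass A y = openCone b) (j : Fin ℓ) : LinearMap.ker (b.coord j) ∈ A := by
  set p := ∑ k ∈ Finset.univ.erase j, b k
  have hp : p ∉ signClass A y := fun h => by
    simpa [p, Basis.coord_sum_self] using (hb ▸ h : p ∈ openCone b) j
  have hpcl : p ∈ closure (signClass A y) := hb ▸ sum_mem_closure_openCone b _
  obtain ⟨H, hH, hpH⟩ : ∃ H ∈ A, p ∈ H := by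
    by_contra! h
    exact hp (hA.closure_signClass_inter_hypComplement hy ⟨hpcl, h⟩)
  rwa [hA.eq_ker_coord_of_sum_mem hy hb hH j hpH]

theorem walls_eq_range (hA : IsArrangement A) (hy : y ∈ hypComplement A)
    (hb : signClass A y = openCone b) :
    walls A (signClass A y) = range fun j => LinearMap.ker (b.coord j) := by
  ext H
  refine ⟨fun ⟨hH, hspan⟩ => ?_, ?_⟩
  · obtain ⟨j, hj⟩ : ∃ j, b j ∉ H := by
      by_contra! h
      exact (hA.2 H hH).ne_top (eq_top_iff.2 fun u _ => b.mem_of_coord_ne_zero fun k _ => h k)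
    have hle : H ≤ LinearMap.ker (b.coord j) := by
      rw [← hspan, span_le]
      rintro z ⟨hz, hzH⟩
      rw [hb] at hz
      by_contra hzj
      refine hj (hA.mem_of_coord_eq_zero_imp hy hb hH hz hzH fun k hk => ?_)
      rcases eq_or_ne k j with rfl | hkj
      · exact absurd hk hzj
      · simp [hkj]
    exact ⟨j, ((hA.2 H hH).eq_of_le (b.isHyperplane_ker_coord j) hle).symm⟩
  · rintro ⟨j, rfl⟩
    refine ⟨hA.ker_coord_mem hy hb j, le_antisymm (span_le.2 inter_subset_right) fun u hu => ?_⟩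
    refine b.mem_of_coord_ne_zero fun k hk => subset_span ⟨?_, ?_⟩
    · simpa [hb] using sum_mem_closure_openCone b {k}
    · simp only [SetLike.mem_coe, LinearMap.mem_ker]
      rcases eq_or_ne k j with rfl | hkj
      · exact absurd (LinearMap.mem_ker.1 hu) hk
      · simp [hkj]

end IsArrangement

end SimplicialChambers

section Adjacency

open Filter Topology

variable {ℓ : ℕ} {A : Set (Submodule ℝ (Fin ℓ → ℝ))} {y q : Fin ℓ → ℝ}
  {b : Basis (Fin ℓ) ℝ (Fin ℓ → ℝ)} {H Hs : Submodule ℝ (Fin ℓ → ℝ)}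

namespace IsArrangement

theorem exists_push_off (hA : IsArrangement A) (hH : H ∈ A) {p v : Fin ℓ → ℝ}
    (hp : ∀ H' ∈ A, p ∈ H' → H' = H) (hpH : p ∈ H) (hv : v ∉ H) :
    ∃ q ∈ hypComplement A, (∀ H' ∈ A, H' ≠ H → 0 < hypForm H' p * hypForm H' q) ∧
      0 < hypForm H v * hypForm H q := by
  have hnear : ∀ᶠ t in 𝓝 (0 : ℝ), ∀ H' ∈ A \ {H}, 0 < hypForm H' p * hypForm H' (p + t • v) := by
    refine (eventually_all_finite hA.1.sdiff).2 fun H' ⟨hH', hne⟩ => ?_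
    have hp' : hypForm H' p ≠ 0 := fun h0 => hne (hp H' hH' ((hA.2 H' hH').mem_iff.2 h0))
    have hcont : Continuous fun t : ℝ => hypForm H' p * hypForm H' (p + t • v) := by
      simp only [map_add, map_smul, smul_eq_mul]
      fun_prop
    exact continuousAt_const.eventually_lt hcont.continuousAt (by simpa using hp')
  obtain ⟨t, ht, ht0⟩ := ((hnear.filter_mono nhdsWithin_le_nhds).and self_mem_nhdsWithin).exists
    (f := 𝓝[>] (0 : ℝ))
  have hvq : 0 < hypForm H v * hypForm H (p + t • v) := by
    rw [map_add, (hA.2 H hH).mem_iff.1 hpH, map_smul, smul_eq_mul, zero_add, mul_left_comm]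
    exact mul_pos ht0 (mul_self_pos.2 ((hA.2 H hH).mem_iff.not.1 hv))
  refine ⟨p + t • v, hA.mem_hypComplement_iff.2 fun H' hH' h0 => ?_,
    fun H' hH' hne => ht H' ⟨hH', hne⟩, hvq⟩
  rcases eq_or_ne H' H with rfl | hne
  · simp [h0] at hvq
  · simpa [h0] using ht H' ⟨hH', hne⟩

theorem exists_mem_walls (hA : IsArrangement A) (hsimp : IsSimplicial A) (hH : H ∈ A) :
    ∃ y ∈ hypComplement A, H ∈ walls A (signClass A y) := by
  obtain ⟨p, hpH, hp⟩ := hA.exists_mem_forall_eq_of_mem hH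
  obtain ⟨v, hv⟩ := SetLike.exists_not_mem_of_ne_top H (hA.2 H hH).ne_top rfl
  obtain ⟨q, hq, hpq, -⟩ := hA.exists_push_off hH hp hpH hv
  obtain ⟨b, hb⟩ := hA.exists_basis_signClass hsimp hq
  have hpcl : p ∈ closure (signClass A q) := by
    rw [hA.closure_signClass hq]
    intro H' hH'
    rcases eq_or_ne H' H with rfl | hne
    · simp [(hA.2 H' hH').mem_iff.1 hpH]
    · exact (mul_comm (hypForm H' p) _ ▸ hpq H' hH' hne).le
  obtain ⟨j, hj⟩ : ∃ j, b.coord j p = 0 := by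
    by_contra! h
    rw [hb, closure_openCone] at hpcl
    have hpK : p ∈ signClass A q := hb ▸ fun j => (hpcl j).lt_of_ne (h j).symm
    exact hA.mem_hypComplement_iff.1 (hA.signClass_subset_hypComplement hpK) H hH
      ((hA.2 H hH).mem_iff.1 hpH)
  refine ⟨q, hq, ?_⟩
  rw [hA.walls_eq_range hq hb]
  exact ⟨j, hp _ (hA.ker_coord_mem hq hb j) hj⟩

/-- The adjacent chamber is reached by pushing the centre of the facet across the wall. -/
theorem exists_adjacent (hA : IsArrangement A) (hy : y ∈ hypComplement A)
    (hb : signClass A y = openCone b) (i : Fin ℓ) {v : Fin ℓ → ℝ}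
    (hv : v ∉ LinearMap.ker (b.coord i)) :
    ∃ q ∈ hypComplement A,
      (∀ H ∈ A, H ≠ LinearMap.ker (b.coord i) → 0 < hypForm H y * hypForm H q) ∧
      0 < hypForm (LinearMap.ker (b.coord i)) v * hypForm (LinearMap.ker (b.coord i)) q := by
  set p := ∑ k ∈ Finset.univ.erase i, b k
  have hpi : p ∈ LinearMap.ker (b.coord i) := by simp [p]
  obtain ⟨q, hq, hpq, hvq⟩ := hA.exists_push_off (hA.ker_coord_mem hy hb i)
    (fun H hH hpH => (hA.eq_ker_coord_of_sum_mem hy hb hH i hpH).symm) hpi hv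
  refine ⟨q, hq, fun H hH hne => ?_, hvq⟩
  have hpcl : p ∈ closure (signClass A y) := hb ▸ sum_mem_closure_openCone b _
  rw [hA.closure_signClass hy] at hpcl
  have hp0 : hypForm H p ≠ 0 := fun h0 =>
    hne (hA.eq_ker_coord_of_sum_mem hy hb hH i ((hA.2 H hH).mem_iff.2 h0)).symm
  exact mul_pos_of_mul_pos_of_mul_pos ((hpcl H hH).lt_of_ne
    (mul_ne_zero (hA.mem_hypComplement_iff.1 hy H hH) hp0).symm) (hpq H hH hne)

theorem closure_signClass_inter_subset (hA : IsArrangement A) (hy : y ∈ hypComplement A)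
    (hq : q ∈ hypComplement A) (hHs : Hs ∈ A)
    (hsign : ∀ H ∈ A, H ≠ Hs → 0 < hypForm H y * hypForm H q) :
    closure (signClass A y) ∩ Hs ⊆ closure (signClass A q) := by
  rintro z ⟨hz, hzs⟩
  rw [hA.closure_signClass hy] at hz
  rw [hA.closure_signClass hq]
  intro H hH
  rcases eq_or_ne H Hs with rfl | hne
  · simp [(hA.2 H hH).mem_iff.1 hzs]
  · exact mul_nonneg_of_mul_pos_of_mul_nonneg (hsign H hH hne) (hz H hH)

end IsArrangement

theorem mem_walls_of_closure_inter_subset {C C' : Set (Fin ℓ → ℝ)} (hH : H ∈ walls A C)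
    (hsub : closure C ∩ H ⊆ closure C') : H ∈ walls A C' :=
  ⟨hH.1, le_antisymm (span_le.2 inter_subset_right)
    (hH.2.ge.trans (span_mono (subset_inter hsub inter_subset_right)))⟩

end Adjacency

section LineClosure

variable {ℓ : ℕ} {A B : Set (Submodule ℝ (Fin ℓ → ℝ))} {x y q : Fin ℓ → ℝ}
  {b : Basis (Fin ℓ) ℝ (Fin ℓ → ℝ)} {H H' Hs : Submodule ℝ (Fin ℓ → ℝ)}

namespace IsArrangement

theorem exists_mem_walls_ne (hA : IsArrangement A) (hy : y ∈ hypComplement A)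
    (hb : signClass A y = openCone b) (hH : H ∈ walls A (signClass A y)) (hH' : H' ∈ A)
    (hne : H' ≠ H) {z : Fin ℓ → ℝ} (hz : z ∈ closure (signClass A y)) (hzH' : z ∈ H') :
    ∃ H₂ ∈ walls A (signClass A y), H₂ ≠ H ∧ z ∈ H₂ := by
  by_contra! hwalls
  refine hne ((hA.2 H hH.1).eq_of_le (hA.2 H' hH') fun u hu => ?_).symm
  rw [hb] at hz
  refine hA.mem_of_coord_eq_zero_imp hy hb hH' hz hzH' fun j hj => ?_
  have hjw : LinearMap.ker (b.coord j) ∈ walls A (signClass A y) := by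
    rw [hA.walls_eq_range hy hb]
    exact ⟨j, rfl⟩
  by_contra hu'
  exact hwalls _ hjw (fun h => hu' (by rw [← LinearMap.mem_ker, h]; exact hu)) hj

theorem walls_subset_of_adjacent (hA : IsArrangement A) (hsimp : IsSimplicial A)
    (hB : IsLineClosed A B) (hy : y ∈ hypComplement A) (hq : q ∈ hypComplement A)
    (hHs : Hs ∈ walls A (signClass A y))
    (hsign : ∀ H ∈ A, H ≠ Hs → 0 < hypForm H y * hypForm H q)
    (hqB : walls A (signClass A q) ⊆ B) : walls A (signClass A y) ⊆ B := by
  classical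
  obtain ⟨b, hb⟩ := hA.exists_basis_signClass hsimp hy
  obtain ⟨b', hb'⟩ := hA.exists_basis_signClass hsimp hq
  have hfacet := hA.closure_signClass_inter_subset hy hq hHs.1 hsign
  have hHsq := mem_walls_of_closure_inter_subset hHs hfacet
  rw [hA.walls_eq_range hy hb] at hHs ⊢
  obtain ⟨i₀, rfl⟩ := hHs
  rintro _ ⟨i, rfl⟩
  rcases eq_or_ne i i₀ with rfl | hi
  · exact hqB hHsq
  -- `z` is the centre of the codimension-two face `ker (b.coord i₀) ∩ ker (b.coord i)`
  set z := ∑ k ∈ (Finset.univ.erase i₀).erase i, b k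
  have hzK : z ∈ closure (signClass A y) := hb ▸ sum_mem_closure_openCone b _
  have hz₀ : z ∈ LinearMap.ker (b.coord i₀) := by
    rw [LinearMap.mem_ker, Basis.coord_sum_self]; simp
  have hzi : z ∈ LinearMap.ker (b.coord i) := by
    rw [LinearMap.mem_ker, Basis.coord_sum_self]; simp
  obtain ⟨H₂, hH₂, hH₂ne, hzH₂⟩ := hA.exists_mem_walls_ne hq hb' hHsq
    (hA.ker_coord_mem hy hb i) (b.ker_coord_injective.ne hi) (hfacet ⟨hzK, hz₀⟩) hzi
  have hface : LinearMap.ker (b.coord i₀) ⊓ LinearMap.ker (b.coord i) ≤ H₂ := by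
    rintro u ⟨hu₀, hui⟩
    rw [hb] at hzK
    refine hA.mem_of_coord_eq_zero_imp hy hb hH₂.1 hzK hzH₂ fun k hk => ?_
    rw [Basis.coord_sum_self] at hk
    obtain rfl | rfl : k = i ∨ k = i₀ := by simp at hk; tauto
    exacts [hui, hu₀]
  exact hB.2 _ (hqB hHsq) _ (hqB hH₂) ⟨hA.ker_coord_mem hy hb i,
    (b.isHyperplane_ker_coord i₀).inf_le_of_inf_le (b.isHyperplane_ker_coord i) (hA.2 _ hH₂.1)
      hface hH₂ne⟩

end IsArrangement

def separating (A : Set (Submodule ℝ (Fin ℓ → ℝ))) (x y : Fin ℓ → ℝ) :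
    Set (Submodule ℝ (Fin ℓ → ℝ)) :=
  {H ∈ A | hypForm H x * hypForm H y < 0}

theorem separating_ssubset (hsep : Hs ∈ separating A x y)
    (hxq : 0 < hypForm Hs x * hypForm Hs q)
    (hsign : ∀ H ∈ A, H ≠ Hs → 0 < hypForm H y * hypForm H q) :
    separating A x q ⊂ separating A x y := by
  refine (ssubset_iff_of_subset ?_).2 ⟨Hs, hsep, fun h => h.2.not_gt hxq⟩
  rintro H ⟨hH, hHq⟩
  refine mem_sep hH ?_
  rcases eq_or_ne H Hs with rfl | hne
  · exact hsep.2
  · by_contra! h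
    exact (mul_nonneg_of_mul_pos_of_mul_nonneg (hsign H hH hne)
      (mul_comm (hypForm H x) _ ▸ h)).not_gt (mul_comm (hypForm H x) _ ▸ hHq)

theorem IsArrangement.walls_subset_of_isLineClosed (hA : IsArrangement A)
    (hsimp : IsSimplicial A) (hB : IsLineClosed A B) (hx : x ∈ hypComplement A)
    (hxB : walls A (signClass A x) ⊆ B) (hy : y ∈ hypComplement A) :
    walls A (signClass A y) ⊆ B := by
  induction hn : (separating A x y).ncard using Nat.strong_induction_on generalizing y with
  | _ n ih =>
  obtain ⟨b, hb⟩ := hA.exists_basis_signClass hsimp hy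
  by_cases hxy : x ∈ signClass A y
  · rwa [← signClass_eq_of_mem hxy]
  -- otherwise some wall `Hs` of the chamber of `y` separates it from `x`; cross it
  obtain ⟨i, hi⟩ : ∃ i, b.coord i x ≤ 0 := by simpa [hb, openCone] using hxy
  set Hs := LinearMap.ker (b.coord i)
  have hHs := hA.ker_coord_mem hy hb i
  have hxHs : x ∉ Hs := fun h => hA.mem_hypComplement_iff.1 hx Hs hHs
    ((hA.2 Hs hHs).mem_iff.1 h)
  have hsep : Hs ∈ separating A x y := by
    have hyi : 0 < b.coord i y := (hb ▸ hA.self_mem_signClass hy : y ∈ openCone b) i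
    exact mem_sep hHs ((hA.2 Hs hHs).hypForm_mul_hypForm_neg rfl
      (mul_neg_of_neg_of_pos (hi.lt_of_ne hxHs) hyi))
  obtain ⟨q, hq, hsign, hxq⟩ := hA.exists_adjacent hy hb i hxHs
  have hlt : (separating A x q).ncard < n :=
    hn ▸ ncard_lt_ncard (separating_ssubset hsep hxq hsign) (hA.1.subset (sep_subset _ _))
  exact hA.walls_subset_of_adjacent hsimp hB hy hq
    (by rw [hA.walls_eq_range hy hb]; exact ⟨i, rfl⟩) hsign (ih _ hlt hq rfl)

end LineClosure

/-- **Proposition 2.9** (`prop:WallsLCBasis`): let `A` be a simplicial central arrangement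
in `ℝ^ℓ`.  Then for each chamber `C` of `A`, the line closure of the set of walls of `C`
is all of `A`. -/
theorem simplicial_walls_lineClosure_eq {ℓ : ℕ}
    (A : Set (Submodule ℝ (Fin ℓ → ℝ))) (hA : IsArrangement A) (hsimp : IsSimplicial A)
    (C : Set (Fin ℓ → ℝ)) (hC : C ∈ chambers A) :
    lineClosure A (walls A C) = A := by
  obtain ⟨x, hx, rfl⟩ := hC
  rw [hA.connectedComponentIn_hypComplement hx]
  refine (lineClosure_subset fun _ h => h.1).antisymm fun H hH => mem_sInter.2 ?_
  rintro B ⟨hB, hxB⟩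
  obtain ⟨y, hy, hHy⟩ := hA.exists_mem_walls hsimp hH
  exact hA.walls_subset_of_isLineClosed hsimp hB hx hxB hy hHy
end

section
/- Let A be a central arrangement in V and Z ∈ L(A). Let K(A) = ⊕_{H∈A} Ann_{V*}(H) and let π_1 : K(A) → V* be the summation map (α_H)_{H∈A} ↦ Σ_H α_H; define K(A^Z) and π_1^Z analogously for the restriction A^Z in Z. Then the map ψ_1 : K(A) → K(A^Z) sending (α_H)_{H∈A} to the tuple whose K-th coordinate (K ∈ A^Z) is Σ_{H ∈ A_K ∖ A_Z} α_H|_Z is surjective, and π_1^Z ∘ ψ_1 = res|_{Z*} ∘ π_1, where res|_{Z*} : V* → Z* is restriction of linear forms to Z. Moreover, for every Y ∈ L(A) with Y ≥ Z, ψ_1 maps the subspace K(A_Y) ⊆ K(A) into K(A_Y^Z) ⊆ K(A^Z), compatibly with the natural inclusions (ψ_1 restricted to K(A_Y) equals ψ_{1,Y}). -/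
open Submodule

section RelationComplex

variable {𝕂 : Type*} [Field 𝕂] {V : Type*} [AddCommGroup V] [Module 𝕂 V]

/-- `K(A) = ⊕_{H ∈ A} Ann_{V*}(H)`, realized as tuples of linear forms indexed by the
hyperplanes: functions `α` with `α H ∈ Ann_{V*}(H)` for all `H`, supported on `A`. -/
def KK (A : Set (Submodule 𝕂 V)) : Set (Submodule 𝕂 V → Module.Dual 𝕂 V) :=
  {α | ∀ H, α H ∈ H.dualAnnihilator ∧ (H ∉ A → α H = 0)}

/-- The summation map `π₁ : K(A) → V*`, `(α_H)_H ↦ Σ_H α_H`. -/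
noncomputable def sumK (α : Submodule 𝕂 V → Module.Dual 𝕂 V) : Module.Dual 𝕂 V :=
  ∑ᶠ H, α H

/-- The relation space `F(A) = ker π₁` (as a subset of `K(A)`). -/
def FF (A : Set (Submodule 𝕂 V)) : Set (Submodule 𝕂 V → Module.Dual 𝕂 V) :=
  {α | α ∈ KK A ∧ sumK α = 0}

open Classical in
/-- The map `ψ₁ : K(A) → K(A^Z)` whose `K`-th coordinate (`K ∈ A^Z`) is
`Σ_{H ∈ A_K ∖ A_Z} α_H|_Z`. -/
noncomputable def psi1 (A : Set (Submodule 𝕂 V)) (Z : Submodule 𝕂 V)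
    (α : Submodule 𝕂 V → Module.Dual 𝕂 V) :
    Submodule 𝕂 ↥Z → Module.Dual 𝕂 ↥Z :=
  fun K =>
    if K ∈ restr A Z then
      ∑ᶠ H ∈ {H | H ∈ A ∧ K.map Z.subtype ≤ H ∧ ¬ Z ≤ H}, Z.subtype.dualMap (α H)
    else 0

end RelationComplex
section AuxLemmas
variable {𝕂 : Type*} [Field 𝕂] {V : Type*} [AddCommGroup V] [Module 𝕂 V]

lemma aux_smul {M : Type*} [AddCommGroup M] [Module 𝕂 M] {f g : M →ₗ[𝕂] 𝕂}
    (h : LinearMap.ker f ≤ LinearMap.ker g) : ∃ c : 𝕂, g = c • f := by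
  by_cases hf : f = 0
  · refine ⟨0, ?_⟩
    have h1 : LinearMap.ker g = ⊤ := top_le_iff.mp (by simpa [hf] using h)
    rw [LinearMap.ker_eq_top] at h1
    simp [h1]
  · obtain ⟨x, hx⟩ : ∃ x, f x ≠ 0 := by
      by_contra hc
      push_neg at hc
      exact hf (LinearMap.ext fun v => by simp [hc v])
    refine ⟨g x / f x, LinearMap.ext fun v => ?_⟩
    have hv : v - (f v / f x) • x ∈ LinearMap.ker f := by
      simp [LinearMap.mem_ker, map_sub, map_smul, div_mul_cancel₀, hx]
    have h2 := h hv
    rw [LinearMap.mem_ker, map_sub, map_smul, sub_eq_zero] at h2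
    rw [LinearMap.smul_apply, h2, smul_eq_mul, smul_eq_mul]
    field_simp

lemma ker_dualMap_form {Z H : Submodule 𝕂 V} {f : Module.Dual 𝕂 V} (hf : LinearMap.ker f = H) :
    LinearMap.ker (Z.subtype.dualMap f) = (Z ⊓ H).comap Z.subtype := by
  rw [LinearMap.dualMap_apply', LinearMap.ker_comp, hf, comap_inf, comap_subtype_self, top_inf_eq]

lemma restr_eq_of_le {Z H H' : Submodule 𝕂 V} (hH : IsHyperplane H) (hH' : IsHyperplane H')
    (hZH : ¬ Z ≤ H) (hle : (Z ⊓ H').comap Z.subtype ≤ (Z ⊓ H).comap Z.subtype) :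
    (Z ⊓ H').comap Z.subtype = (Z ⊓ H).comap Z.subtype := by
  obtain ⟨f, hf0, hf⟩ := hH
  obtain ⟨f', hf'0, hf'⟩ := hH'
  rw [← ker_dualMap_form hf, ← ker_dualMap_form hf'] at hle ⊢
  obtain ⟨c, hc⟩ := aux_smul hle
  have hfz : Z.subtype.dualMap f ≠ 0 := by
    intro h0
    apply hZH
    have h1 : LinearMap.ker (Z.subtype.dualMap f) = ⊤ := by rw [h0]; exact LinearMap.ker_zero
    rw [ker_dualMap_form hf, comap_subtype_eq_top] at h1
    exact le_trans h1 inf_le_right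
  have hc0 : c ≠ 0 := by rintro rfl; rw [zero_smul] at hc; exact hfz hc
  rw [hc, LinearMap.ker_smul _ c hc0]

lemma mem_S_iff {A : Set (Submodule 𝕂 V)} (hA2 : ∀ H ∈ A, IsHyperplane H) {Z : Submodule 𝕂 V}
    {K : Submodule 𝕂 ↥Z} (hK : K ∈ restr A Z) {H : Submodule 𝕂 V} (hHA : H ∈ A)
    (hZH : ¬ Z ≤ H) (hle : K.map Z.subtype ≤ H) : K = (Z ⊓ H).comap Z.subtype := by
  obtain ⟨H', hH'A, hZH', rfl⟩ := hK
  have hmap : ((Z ⊓ H').comap Z.subtype).map Z.subtype = Z ⊓ H' := by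
    rw [map_comap_subtype, ← inf_assoc, inf_idem]
  rw [hmap] at hle
  exact restr_eq_of_le (hA2 H hHA) (hA2 H' hH'A) hZH
    (comap_mono (le_inf inf_le_left hle))

lemma psi1_mem_KK {A : Set (Submodule 𝕂 V)} (hfin : A.Finite) {Z : Submodule 𝕂 V}
    {α : Submodule 𝕂 V → Module.Dual 𝕂 V} (hα : α ∈ KK A) :
    psi1 A Z α ∈ KK (restr A Z) := by
  intro K
  constructor
  · unfold psi1
    split_ifs with h
    · have hS : {H | H ∈ A ∧ K.map Z.subtype ≤ H ∧ ¬ Z ≤ H}.Finite :=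
        hfin.subset fun H hH => hH.1
      rw [finsum_mem_eq_finite_toFinset_sum _ hS]
      refine Submodule.sum_mem _ fun H hH => ?_
      rw [Set.Finite.mem_toFinset] at hH
      rw [Submodule.mem_dualAnnihilator]
      intro w hw
      rw [LinearMap.dualMap_apply]
      exact (Submodule.mem_dualAnnihilator _).mp (hα H).1 _ (hH.2.1 (Submodule.mem_map_of_mem hw))
    · exact Submodule.zero_mem _
  · intro hK
    unfold psi1
    rw [if_neg hK]

end AuxLemmas
section AuxLemmas2
variable {𝕂 : Type*} [Field 𝕂] {V : Type*} [AddCommGroup V] [Module 𝕂 V]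

lemma sumK_psi1 {A : Set (Submodule 𝕂 V)} (hfin : A.Finite) (hA2 : ∀ H ∈ A, IsHyperplane H)
    {Z : Submodule 𝕂 V} {α : Submodule 𝕂 V → Module.Dual 𝕂 V} (hα : α ∈ KK A) :
    sumK (psi1 A Z α) = Z.subtype.dualMap (sumK α) := by
  classical
  set g : Submodule 𝕂 V → Module.Dual 𝕂 ↥Z := fun H => Z.subtype.dualMap (α H) with hg
  set T : Set (Submodule 𝕂 V) := {H | H ∈ A ∧ ¬ Z ≤ H} with hTdef
  have hT : T.Finite := hfin.subset fun H h => h.1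
  have hsuppα : Function.support α ⊆ A := fun H hH => by
    by_contra hc; exact hH ((hα H).2 hc)
  have hsuppg : Function.support g ⊆ T := by
    intro H hH
    have hαH : α H ≠ 0 := fun h0 => hH (by simp [hg, h0])
    refine ⟨hsuppα hαH, fun hZH => hH ?_⟩
    show Z.subtype.dualMap (α H) = 0
    refine LinearMap.ext fun z => ?_
    rw [LinearMap.dualMap_apply, LinearMap.zero_apply]
    exact (Submodule.mem_dualAnnihilator _).mp (hα H).1 _ (hZH z.2)
  have hRHS : Z.subtype.dualMap (sumK α) = ∑ᶠ H ∈ T, g H := by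
    rw [sumK]
    have := AddMonoidHom.map_finsum (Z.subtype.dualMap (R := 𝕂)).toAddMonoidHom
      (hfin.subset hsuppα)
    rw [show Z.subtype.dualMap (∑ᶠ H, α H) = ∑ᶠ H, g H from this]
    rw [← finsum_mem_univ]
    exact finsum_mem_inter_support_eq _ _ _
      (by rw [Set.univ_inter, (Set.inter_eq_right.mpr hsuppg)])
  rw [hRHS]
  have hsupp_psi : Function.support (psi1 A Z α) ⊆ restr A Z := by
    intro K hK
    by_contra hc
    apply hK
    show psi1 A Z α K = 0
    unfold psi1
    rw [if_neg hc]
  have hR : (restr A Z).Finite := by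
    refine (hfin.image (fun H => (Z ⊓ H).comap Z.subtype)).subset ?_
    rintro K ⟨H, h1, h2, h3⟩
    exact ⟨H, h1, h3.symm⟩
  rw [sumK, ← finsum_mem_univ,
    finsum_mem_inter_support_eq _ Set.univ (restr A Z)
      (by rw [Set.univ_inter, (Set.inter_eq_right.mpr hsupp_psi)]),
    finsum_mem_eq_finite_toFinset_sum _ hR]
  have inner : ∀ K ∈ hR.toFinset, psi1 A Z α K =
      ∑ H ∈ hT.toFinset.filter (fun H => (Z ⊓ H).comap Z.subtype = K), g H := by
    intro K hKmem
    rw [Set.Finite.mem_toFinset] at hKmem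
    unfold psi1
    rw [if_pos hKmem]
    have hSfin : {H | H ∈ A ∧ K.map Z.subtype ≤ H ∧ ¬ Z ≤ H}.Finite :=
      hfin.subset fun H h => h.1
    rw [finsum_mem_eq_finite_toFinset_sum _ hSfin]
    refine Finset.sum_congr ?_ (fun _ _ => rfl)
    ext H
    simp only [Set.Finite.mem_toFinset, Finset.mem_filter, Set.mem_setOf_eq, hTdef]
    constructor
    · rintro ⟨h1, h2, h3⟩
      exact ⟨⟨h1, h3⟩, (mem_S_iff hA2 hKmem h1 h3 h2).symm⟩
    · rintro ⟨⟨h1, h3⟩, h4⟩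
      refine ⟨h1, ?_, h3⟩
      subst h4
      rw [map_comap_subtype, ← inf_assoc, inf_idem]
      exact inf_le_right
  rw [Finset.sum_congr rfl inner]
  have hmaps : ∀ H ∈ hT.toFinset, (Z ⊓ H).comap Z.subtype ∈ hR.toFinset := by
    intro H hH
    rw [Set.Finite.mem_toFinset] at hH ⊢
    exact ⟨H, hH.1, hH.2, rfl⟩
  calc ∑ K ∈ hR.toFinset, ∑ H ∈ hT.toFinset.filter (fun H => (Z ⊓ H).comap Z.subtype = K), g H
      = ∑ H ∈ hT.toFinset, g H := Finset.sum_fiberwise_of_maps_to hmaps g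
    _ = ∑ᶠ H ∈ T, g H := (finsum_mem_eq_finite_toFinset_sum _ hT).symm

lemma ext_exists {Z H : Submodule 𝕂 V} (hH : IsHyperplane H) (hZH : ¬ Z ≤ H)
    {b : Module.Dual 𝕂 ↥Z} (hb : b ∈ ((Z ⊓ H).comap Z.subtype).dualAnnihilator) :
    ∃ g : Module.Dual 𝕂 V, g ∈ H.dualAnnihilator ∧ Z.subtype.dualMap g = b := by
  obtain ⟨f, hf0, hf⟩ := hH
  have hle : LinearMap.ker (Z.subtype.dualMap f) ≤ LinearMap.ker b := by
    rw [ker_dualMap_form hf]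
    intro x hx
    exact LinearMap.mem_ker.mpr ((Submodule.mem_dualAnnihilator b).mp hb x hx)
  obtain ⟨c, hc⟩ := aux_smul hle
  refine ⟨c • f, ?_, ?_⟩
  · rw [Submodule.mem_dualAnnihilator]
    intro w hw
    have hfw : f w = 0 := by rw [← LinearMap.mem_ker, hf]; exact hw
    rw [LinearMap.smul_apply, hfw, smul_zero]
  · rw [map_smul, ← hc]

end AuxLemmas2
section AuxLemmas3
variable {𝕂 : Type*} [Field 𝕂] {V : Type*} [AddCommGroup V] [Module 𝕂 V]

lemma psi1_surjOn {A : Set (Submodule 𝕂 V)} (hfin : A.Finite) (hA2 : ∀ H ∈ A, IsHyperplane H)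
    (Z : Submodule 𝕂 V) : Set.SurjOn (psi1 A Z) (KK A) (KK (restr A Z)) := by
  classical
  intro β hβ
  have hβ' : ∀ K, β K ∈ K.dualAnnihilator ∧ (K ∉ restr A Z → β K = 0) := hβ
  have pick_spec : ∀ K : Submodule 𝕂 ↥Z, K ∈ restr A Z →
      ∃ H, (H ∈ A ∧ ¬ Z ≤ H) ∧ K = (Z ⊓ H).comap Z.subtype := by
    rintro K ⟨H, h1, h2, h3⟩; exact ⟨H, ⟨h1, h2⟩, h3⟩
  choose pick hpick1 hpick2 using pick_spec
  set α : Submodule 𝕂 V → Module.Dual 𝕂 V := fun H =>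
    if h : ∃ hh : H ∈ A ∧ ¬ Z ≤ H, pick ((Z ⊓ H).comap Z.subtype) ⟨H, hh.1, hh.2, rfl⟩ = H then
      (ext_exists (hA2 H h.choose.1) h.choose.2 ((hβ' ((Z ⊓ H).comap Z.subtype)).1)).choose
    else 0 with hαdef
  have hαKK : α ∈ KK A := by
    intro H
    constructor
    · simp only [hαdef]
      split_ifs with h
      · exact (ext_exists (hA2 H h.choose.1) h.choose.2
          ((hβ' ((Z ⊓ H).comap Z.subtype)).1)).choose_spec.1
      · exact Submodule.zero_mem _
    · intro hHA
      simp only [hαdef]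
      rw [dif_neg]
      rintro ⟨hh, -⟩
      exact hHA hh.1
  refine ⟨α, hαKK, funext fun K => ?_⟩
  by_cases hK : K ∈ restr A Z
  · have hp1 := hpick1 K hK
    set H₀ := pick K hK with hH₀
    have hKH₀ : K = (Z ⊓ H₀).comap Z.subtype := hpick2 K hK
    have hpickeq : ∀ (K' : Submodule 𝕂 ↥Z) (hK' : K' ∈ restr A Z), K' = K →
        pick K' hK' = H₀ := by
      rintro K' hK' rfl; rfl
    have hcond : ∃ hh : H₀ ∈ A ∧ ¬ Z ≤ H₀,
        pick ((Z ⊓ H₀).comap Z.subtype) ⟨H₀, hh.1, hh.2, rfl⟩ = H₀ :=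
      ⟨hp1, hpickeq _ _ hKH₀.symm⟩
    unfold psi1
    rw [if_pos hK]
    have hSfin : ({H | H ∈ A ∧ K.map Z.subtype ≤ H ∧ ¬ Z ≤ H}).Finite :=
      hfin.subset fun H h => h.1
    rw [finsum_mem_eq_finite_toFinset_sum _ hSfin]
    have hH₀S : H₀ ∈ hSfin.toFinset := by
      rw [Set.Finite.mem_toFinset]
      refine ⟨hp1.1, ?_, hp1.2⟩
      rw [hKH₀, map_comap_subtype, ← inf_assoc, inf_idem]
      exact inf_le_right
    rw [Finset.sum_eq_single_of_mem H₀ hH₀S ?_]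
    · have hα0 : α H₀ = (ext_exists (hA2 H₀ hcond.choose.1) hcond.choose.2
          ((hβ' ((Z ⊓ H₀).comap Z.subtype)).1)).choose := by
        simp only [hαdef]
        rw [dif_pos hcond]
      have hspec := (ext_exists (hA2 H₀ hcond.choose.1) hcond.choose.2
          ((hβ' ((Z ⊓ H₀).comap Z.subtype)).1)).choose_spec
      rw [hα0, hspec.2, ← hKH₀]
    · intro H hH hne
      rw [Set.Finite.mem_toFinset] at hH
      obtain ⟨h1, h2, h3⟩ := hH
      have hKH : K = (Z ⊓ H).comap Z.subtype := mem_S_iff hA2 hK h1 h3 h2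
      have hα0 : α H = 0 := by
        simp only [hαdef]
        rw [dif_neg]
        rintro ⟨hh, hp⟩
        exact hne (hp.symm.trans (hpickeq _ ⟨H, hh.1, hh.2, rfl⟩ hKH.symm))
      rw [hα0, map_zero]
  · unfold psi1
    rw [if_neg hK, (hβ' K).2 hK]

lemma psi1_locz_eq {A : Set (Submodule 𝕂 V)} (hA2 : ∀ H ∈ A, IsHyperplane H)
    {Z Y : Submodule 𝕂 V} {α : Submodule 𝕂 V → Module.Dual 𝕂 V}
    (hα : α ∈ KK (locz A Y)) : psi1 A Z α = psi1 (locz A Y) Z α := by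
  funext K
  unfold psi1
  by_cases h1 : K ∈ restr (locz A Y) Z
  · have h2 : K ∈ restr A Z := by
      obtain ⟨H, hH, h3, h4⟩ := h1
      exact ⟨H, hH.1, h3, h4⟩
    rw [if_pos h1, if_pos h2]
    apply finsum_mem_inter_support_eq
    ext H
    simp only [Set.mem_inter_iff, Function.mem_support, Set.mem_setOf_eq]
    constructor
    · rintro ⟨⟨hHA, hle, hZH⟩, hne⟩
      have hHloc : H ∈ locz A Y := by
        by_contra hc
        exact hne (by rw [(hα H).2 hc, map_zero])
      exact ⟨⟨hHloc, hle, hZH⟩, hne⟩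
    · rintro ⟨⟨hHl, hle, hZH⟩, hne⟩
      exact ⟨⟨hHl.1, hle, hZH⟩, hne⟩
  · rw [if_neg h1]
    by_cases h2 : K ∈ restr A Z
    · rw [if_pos h2]
      apply finsum_mem_of_eqOn_zero
      intro H hH
      obtain ⟨hHA, hle, hZH⟩ := hH
      by_contra hne
      have hαH : α H ≠ 0 := fun h0 => hne (by simp [h0])
      have hHloc : H ∈ locz A Y := by
        by_contra hc
        exact hαH ((hα H).2 hc)
      exact h1 ⟨H, hHloc, hZH, mem_S_iff hA2 h2 hHA hZH hle⟩
    · rw [if_neg h2]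

end AuxLemmas3
/-- **Proposition 4.1** (`prop:psi1`): `ψ₁ : K(A) → K(A^Z)` is a well-defined surjection
satisfying `π₁^Z ∘ ψ₁ = res|_{Z*} ∘ π₁`; moreover for every `Y ∈ L(A)` with `Y ≥ Z`
(reverse inclusion, i.e. `Y ⊆ Z`), `ψ₁` maps `K(A_Y) ⊆ K(A)` into `K(A_Y^Z) ⊆ K(A^Z)`,
compatibly with the natural inclusions: on `K(A_Y)`, `ψ₁` coincides with `ψ_{1,Y}`. -/
theorem psi1_surjective_commutes {𝕂 : Type*} [Field 𝕂] {ℓ : ℕ}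
    (A : Set (Submodule 𝕂 (Fin ℓ → 𝕂))) (hA : IsArrangement A)
    (Z : Submodule 𝕂 (Fin ℓ → 𝕂)) (hZ : Z ∈ interLattice A) :
    Set.MapsTo (psi1 A Z) (KK A) (KK (restr A Z)) ∧
    Set.SurjOn (psi1 A Z) (KK A) (KK (restr A Z)) ∧
    (∀ α ∈ KK A, sumK (psi1 A Z α) = Z.subtype.dualMap (sumK α)) ∧
    (∀ Y ∈ interLattice A, Y ≤ Z → ∀ α ∈ KK (locz A Y),
      psi1 A Z α = psi1 (locz A Y) Z α ∧
      psi1 (locz A Y) Z α ∈ KK (restr (locz A Y) Z)) := by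
  obtain ⟨hfin, hA2⟩ := hA
  refine ⟨fun α hα => psi1_mem_KK hfin hα, psi1_surjOn hfin hA2 Z,
    fun α hα => sumK_psi1 hfin hA2 hα, ?_⟩
  intro Y hY hYZ α hα
  have hlocfin : (locz A Y).Finite := hfin.subset fun H h => h.1
  exact ⟨psi1_locz_eq hA2 hα, psi1_mem_KK hlocfin hα⟩
end

section
/- Let A be a central arrangement in V, Z ∈ L(A), and let ψ̃_1 : F(A) → F(A^Z) be the map induced on relation spaces by ψ_1. Let π_2 : ⊕_{X ∈ L_2(A)} F(A_X) → F(A) and π_2^Z : ⊕_{Y ∈ L_2(A^Z)} F((A^Z)_Y) → F(A^Z) be the sums of the natural inclusion maps. Then ψ̃_1(im(π_2)) ⊆ im(π_2^Z); in particular, the induced map coker(π_2) → coker(π_2^Z) is surjective. -/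
open Submodule

section MyHelpers

open LinearMap Set

variable {𝕂 : Type*} [Field 𝕂] {V : Type*} [AddCommGroup V] [Module 𝕂 V]

theorem dual_factor {f g : Module.Dual 𝕂 V} (hf : f ≠ 0)
    (h : LinearMap.ker f ≤ LinearMap.ker g) : ∃ c : 𝕂, g = c • f := by
  obtain ⟨x, hx⟩ : ∃ x, f x ≠ 0 := by
    by_contra hc
    push_neg at hc
    exact hf (LinearMap.ext fun v => by simp [hc])
  refine ⟨g x / f x, LinearMap.ext fun v => ?_⟩
  have hker : v - (f v / f x) • x ∈ LinearMap.ker f := by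
    simp [LinearMap.mem_ker, map_sub, map_smul, div_mul_cancel₀ _ hx]
  have h2 := h hker
  rw [LinearMap.mem_ker, map_sub, map_smul, sub_eq_zero] at h2
  rw [h2, LinearMap.smul_apply, smul_eq_mul, smul_eq_mul]
  field_simp

theorem ker_eq_ker_of_le {f g : Module.Dual 𝕂 V} (hf : f ≠ 0) (hg : g ≠ 0)
    (h : LinearMap.ker f ≤ LinearMap.ker g) : LinearMap.ker f = LinearMap.ker g := by
  obtain ⟨c, rfl⟩ := dual_factor hf h
  have hc : c ≠ 0 := by rintro rfl; simp at hg
  ext v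
  simp [LinearMap.mem_ker, smul_eq_zero, hc]

theorem comap_subtype_inf (Z H : Submodule 𝕂 V) :
    (Z ⊓ H).comap Z.subtype = H.comap Z.subtype := by
  ext z
  simp [z.2]

theorem mem_restr_iff {A : Set (Submodule 𝕂 V)} {Z : Submodule 𝕂 V} {K : Submodule 𝕂 ↥Z} :
    K ∈ restr A Z ↔ ∃ H ∈ A, ¬ Z ≤ H ∧ K = H.comap Z.subtype := by
  unfold restr
  simp_rw [comap_subtype_inf]
  rfl

theorem restr_dual {Z H : Submodule 𝕂 V} (hH : IsHyperplane H) (hZH : ¬ Z ≤ H) :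
    ∃ g : Module.Dual 𝕂 ↥Z, g ≠ 0 ∧ LinearMap.ker g = H.comap Z.subtype := by
  obtain ⟨f, hf0, rfl⟩ := hH
  refine ⟨Z.subtype.dualMap f, ?_, ?_⟩
  · intro h0
    apply hZH
    intro z hz
    have := DFunLike.congr_fun h0 ⟨z, hz⟩
    simpa using this
  · ext z
    simp [LinearMap.mem_ker]

theorem exists_lift_dual {Z H : Submodule 𝕂 V} (hH : IsHyperplane H) (hZH : ¬ Z ≤ H)
    {φ : Module.Dual 𝕂 ↥Z} (hφ : φ ∈ (H.comap Z.subtype).dualAnnihilator) :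
    ∃ g : Module.Dual 𝕂 V, g ∈ H.dualAnnihilator ∧ Z.subtype.dualMap g = φ ∧
      (φ = 0 → g = 0) := by
  obtain ⟨f, hf0, hfk⟩ := hH
  have hres : Z.subtype.dualMap f ≠ 0 := by
    intro h0
    apply hZH
    intro z hz
    have h1 := DFunLike.congr_fun h0 ⟨z, hz⟩
    rw [← hfk]
    simpa using h1
  have hker : LinearMap.ker (Z.subtype.dualMap f) = H.comap Z.subtype := by
    rw [← hfk]
    ext z
    simp [LinearMap.mem_ker]
  have hle : LinearMap.ker (Z.subtype.dualMap f) ≤ LinearMap.ker φ := by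
    rw [hker]
    intro z hz
    exact LinearMap.mem_ker.2 ((Submodule.mem_dualAnnihilator φ).1 hφ z hz)
  obtain ⟨c, hc⟩ := dual_factor hres hle
  refine ⟨c • f, ?_, ?_, ?_⟩
  · rw [Submodule.mem_dualAnnihilator]
    intro x hx
    rw [← hfk] at hx
    simp [LinearMap.mem_ker.1 hx]
  · rw [map_smul, ← hc]
  · intro h0
    rw [h0] at hc
    rcases smul_eq_zero.1 hc.symm with h | h
    · simp [h]
    · exact absurd h hres

theorem interLattice_eq_sInf_locz {A : Set (Submodule 𝕂 V)} {X : Submodule 𝕂 V}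
    (hX : X ∈ interLattice A) : X = sInf (locz A X) := by
  obtain ⟨B, hBA, rfl⟩ := hX
  refine le_antisymm (le_sInf fun H hH => hH.2) ?_
  exact sInf_le_sInf fun H hH => ⟨hBA hH, sInf_le hH⟩

end MyHelpers

section Psi1Lemmas

open LinearMap Set

variable {𝕂 : Type*} [Field 𝕂] {V : Type*} [AddCommGroup V] [Module 𝕂 V]
  {A : Set (Submodule 𝕂 V)} {Z : Submodule 𝕂 V}

theorem TK_eq (hA : IsArrangement A) {K : Submodule 𝕂 ↥Z} (hK : K ∈ restr A Z) :
    {H | H ∈ A ∧ K.map Z.subtype ≤ H ∧ ¬ Z ≤ H}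
      = {H | H ∈ A ∧ ¬ Z ≤ H ∧ H.comap Z.subtype = K} := by
  ext H
  constructor
  · rintro ⟨hHA, hle, hZH⟩
    refine ⟨hHA, hZH, ?_⟩
    have hK' : K ≤ H.comap Z.subtype := Submodule.map_le_iff_le_comap.1 hle
    obtain ⟨H', hH'A, hZH', rfl⟩ := mem_restr_iff.1 hK
    obtain ⟨g, hg0, hgk⟩ := restr_dual (hA.2 _ hHA) hZH
    obtain ⟨g', hg'0, hg'k⟩ := restr_dual (hA.2 _ hH'A) hZH'
    rw [← hgk, ← hg'k] at hK' ⊢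
    exact (ker_eq_ker_of_le hg'0 hg0 hK').symm
  · rintro ⟨hHA, hZH, rfl⟩
    exact ⟨hHA, Submodule.map_le_iff_le_comap.2 le_rfl, hZH⟩

open Classical in
theorem psi1_eq (hA : IsArrangement A) {K : Submodule 𝕂 ↥Z} (hK : K ∈ restr A Z)
    (α : Submodule 𝕂 V → Module.Dual 𝕂 V) :
    psi1 A Z α K = ∑ H ∈ hA.1.toFinset.filter
      (fun H => ¬ Z ≤ H ∧ H.comap Z.subtype = K), Z.subtype.dualMap (α H) := by
  rw [psi1, if_pos hK]
  apply finsum_mem_eq_sum_of_subset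
  · intro H hH
    have h2 := (TK_eq hA hK ▸ hH.1 : H ∈ {H | H ∈ A ∧ ¬ Z ≤ H ∧ H.comap Z.subtype = K})
    simp only [Finset.coe_filter, Set.Finite.mem_toFinset, mem_setOf_eq]
    exact ⟨h2.1, h2.2⟩
  · intro H hH
    simp only [Finset.coe_filter, Set.Finite.mem_toFinset, mem_setOf_eq] at hH
    exact (TK_eq hA hK).symm ▸ (⟨hH.1, hH.2.1, hH.2.2⟩ :
      H ∈ {H | H ∈ A ∧ ¬ Z ≤ H ∧ H.comap Z.subtype = K})

theorem psi1_notMem {K : Submodule 𝕂 ↥Z} (hK : K ∉ restr A Z)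
    (α : Submodule 𝕂 V → Module.Dual 𝕂 V) : psi1 A Z α K = 0 := by
  rw [psi1, if_neg hK]

theorem psi1_add (hA : IsArrangement A) (α β : Submodule 𝕂 V → Module.Dual 𝕂 V) :
    psi1 A Z (α + β) = psi1 A Z α + psi1 A Z β := by
  funext K
  by_cases hK : K ∈ restr A Z
  · rw [Pi.add_apply, psi1_eq hA hK, psi1_eq hA hK, psi1_eq hA hK, ← Finset.sum_add_distrib]
    exact Finset.sum_congr rfl fun H _ => by simp
  · simp [psi1_notMem hK]

theorem psi1_smul (hA : IsArrangement A) (c : 𝕂) (α : Submodule 𝕂 V → Module.Dual 𝕂 V) :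
    psi1 A Z (c • α) = c • psi1 A Z α := by
  funext K
  by_cases hK : K ∈ restr A Z
  · rw [Pi.smul_apply, psi1_eq hA hK, psi1_eq hA hK, Finset.smul_sum]
    exact Finset.sum_congr rfl fun H _ => by simp
  · simp [psi1_notMem hK]

theorem psi1_zero (hA : IsArrangement A) : psi1 A Z (0 : Submodule 𝕂 V → Module.Dual 𝕂 V) = 0 := by
  funext K
  by_cases hK : K ∈ restr A Z
  · rw [psi1_eq hA hK]
    simp
  · simp [psi1_notMem hK]

theorem restr_finite (hA : IsArrangement A) : (restr A Z).Finite := by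
  apply Set.Finite.subset (hA.1.image (fun H => H.comap Z.subtype))
  intro K hK
  obtain ⟨H, hHA, _, rfl⟩ := mem_restr_iff.1 hK
  exact Set.mem_image_of_mem _ hHA

end Psi1Lemmas

section RkLemmas

open LinearMap

variable {𝕂 : Type*} [Field 𝕂] {V : Type*} [AddCommGroup V] [Module 𝕂 V]
  [FiniteDimensional 𝕂 V]

theorem rk_le_of_le {Y W : Submodule 𝕂 V} (h : Y ≤ W) : rk W ≤ rk Y := by
  have h1 := Submodule.finrank_quotient_add_finrank Y
  have h2 := Submodule.finrank_quotient_add_finrank W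
  have h3 : Module.finrank 𝕂 Y ≤ Module.finrank 𝕂 W := Submodule.finrank_mono h
  unfold rk
  omega

theorem two_le_rk_inf {f g : Module.Dual 𝕂 V} (hf : f ≠ 0) (hg : g ≠ 0)
    (hne : LinearMap.ker f ≠ LinearMap.ker g) :
    2 ≤ rk (LinearMap.ker f ⊓ LinearMap.ker g) := by
  have hlt1 : LinearMap.ker f ⊓ LinearMap.ker g < LinearMap.ker f := by
    refine lt_of_le_of_ne inf_le_left fun h => hne ?_
    exact ker_eq_ker_of_le hf hg (h ▸ inf_le_right)
  have hlt2 : LinearMap.ker f < ⊤ := lt_of_le_of_ne le_top (fun h => hf (LinearMap.ker_eq_top.1 h))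
  have h1 : Module.finrank 𝕂 ↥(LinearMap.ker f ⊓ LinearMap.ker g) <
      Module.finrank 𝕂 ↥(LinearMap.ker f) := Submodule.finrank_lt_finrank_of_lt hlt1
  have h2 : Module.finrank 𝕂 ↥(LinearMap.ker f) < Module.finrank 𝕂 V := by
    have := Submodule.finrank_lt_finrank_of_lt hlt2
    simpa using this
  have h3 := Submodule.finrank_quotient_add_finrank (LinearMap.ker f ⊓ LinearMap.ker g)
  unfold rk
  omega

theorem rk_comap_le (Z X : Submodule 𝕂 V) : rk (X.comap Z.subtype) ≤ rk X := by
  set Y := X.comap Z.subtype with hY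
  have hle : Y ≤ LinearMap.ker (X.mkQ.comp Z.subtype) := by
    intro z hz
    simp only [LinearMap.mem_ker, LinearMap.comp_apply, Submodule.mkQ_apply,
      Submodule.Quotient.mk_eq_zero]
    exact hz
  let F : (↥Z ⧸ Y) →ₗ[𝕂] (V ⧸ X) := Y.liftQ (X.mkQ.comp Z.subtype) hle
  have hinj : Function.Injective F := by
    rw [← LinearMap.ker_eq_bot]
    apply Submodule.ker_liftQ_eq_bot
    intro z hz
    simp only [LinearMap.mem_ker, LinearMap.comp_apply, Submodule.mkQ_apply,
      Submodule.Quotient.mk_eq_zero] at hz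
    exact hz
  exact LinearMap.finrank_le_finrank_of_injective hinj

end RkLemmas

section Part1

open LinearMap Set

variable {𝕂 : Type*} [Field 𝕂] {V : Type*} [AddCommGroup V] [Module 𝕂 V]

theorem dualMap_eq_zero_of_le {Z H : Submodule 𝕂 V} {φ : Module.Dual 𝕂 V}
    (hφ : φ ∈ H.dualAnnihilator) (hZH : Z ≤ H) : Z.subtype.dualMap φ = 0 :=
  LinearMap.ext fun z => (Submodule.mem_dualAnnihilator φ).1 hφ z (hZH z.2)

theorem sumK_eq_sum {S : Set (Submodule 𝕂 V)} (hS : S.Finite)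
    {α : Submodule 𝕂 V → Module.Dual 𝕂 V} (hsupp : ∀ H, α H ≠ 0 → H ∈ S) :
    sumK α = ∑ H ∈ hS.toFinset, α H := by
  apply finsum_eq_sum_of_support_subset
  intro H hH
  rw [Set.Finite.coe_toFinset]
  exact hsupp H hH

theorem psi1_generator [FiniteDimensional 𝕂 V]
    {A : Set (Submodule 𝕂 V)} (hA : IsArrangement A) (Z : Submodule 𝕂 V)
    {X : Submodule 𝕂 V} (hX : X ∈ interLattice A) (hrkX : rk X = 2)
    {α : Submodule 𝕂 V → Module.Dual 𝕂 V} (hα : α ∈ FF (locz A X)) :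
    psi1 A Z α ∈ Submodule.span 𝕂
      (⋃ Y ∈ {Y ∈ interLattice (restr A Z) | rk Y = 2}, FF (locz (restr A Z) Y)) := by
  classical
  set 𝒜 := hA.1.toFinset with h𝒜
  have hmem𝒜 : ∀ H, H ∈ 𝒜 ↔ H ∈ A := fun H => hA.1.mem_toFinset
  have hsupp : ∀ H, α H ≠ 0 → H ∈ locz A X := fun H h => by
    by_contra hc; exact h ((hα.1 H).2 hc)
  have hann : ∀ H, α H ∈ H.dualAnnihilator := fun H => (hα.1 H).1
  have hsum0 : ∑ H ∈ 𝒜, α H = 0 := by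
    rw [← sumK_eq_sum hA.1 (fun H h => (hsupp H h).1)]
    exact hα.2
  have htot : ∑ H ∈ 𝒜, Z.subtype.dualMap (α H) = 0 := by
    rw [← map_sum, hsum0, map_zero]
  by_cases hcase : ∀ H₁ ∈ A, X ≤ H₁ → ¬ Z ≤ H₁ → ∀ H₂ ∈ A, X ≤ H₂ → ¬ Z ≤ H₂ →
      H₁.comap Z.subtype = H₂.comap Z.subtype
  · -- psi1 α = 0
    have hz : psi1 A Z α = 0 := by
      funext K
      show psi1 A Z α K = 0
      by_cases hK : K ∈ restr A Z
      · rw [psi1_eq hA hK]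
        by_cases hex : ∃ H₀ ∈ 𝒜.filter (fun H => ¬ Z ≤ H ∧ H.comap Z.subtype = K), α H₀ ≠ 0
        · obtain ⟨H₀, hH₀mem, hH₀⟩ := hex
          simp only [Finset.mem_filter, Set.Finite.mem_toFinset] at hH₀mem
          have hH₀X : X ≤ H₀ := (hsupp H₀ hH₀).2
          rw [Finset.sum_subset (Finset.filter_subset _ _), htot]
          intro H hH hHn
          simp only [Finset.mem_filter, not_and] at hHn
          by_cases hαH : α H = 0
          · rw [hαH, map_zero]
          · have hHX := hsupp H hαH
            by_cases hZH : Z ≤ H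
            · exact dualMap_eq_zero_of_le (hann H) hZH
            · exact absurd ((hcase H hHX.1 hHX.2 hZH H₀ ((hmem𝒜 _).1 hH₀mem.1) hH₀X
                hH₀mem.2.1).trans hH₀mem.2.2) (hHn hH hZH)
        · push_neg at hex
          apply Finset.sum_eq_zero
          intro H hH
          rw [hex H hH, map_zero]
      · exact psi1_notMem hK α
    rw [hz]
    exact Submodule.zero_mem _
  · push_neg at hcase
    obtain ⟨H₁, hH₁A, hH₁X, hZH₁, H₂, hH₂A, hH₂X, hZH₂, hne⟩ := hcase
    set Y : Submodule 𝕂 ↥Z := X.comap Z.subtype with hYdef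
    have hXsInf := interLattice_eq_sInf_locz hX
    have hYL : Y ∈ interLattice (restr A Z) := by
      refine ⟨(fun H => H.comap Z.subtype) '' {H | H ∈ A ∧ X ≤ H ∧ ¬ Z ≤ H}, ?_, ?_⟩
      · rintro K ⟨H, ⟨hHA, hHX, hZH⟩, rfl⟩
        exact mem_restr_iff.2 ⟨H, hHA, hZH, rfl⟩
      · apply le_antisymm
        · apply le_sInf
          rintro K ⟨H, ⟨hHA, hHX, hZH⟩, rfl⟩
          exact Submodule.comap_mono hHX
        · intro z hz
          show (z : V) ∈ X
          rw [hXsInf]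
          apply Submodule.mem_sInf.2
          intro H hH
          by_cases hZH : Z ≤ H
          · exact hZH z.2
          · exact Submodule.mem_sInf.1 hz (H.comap Z.subtype)
              ⟨H, ⟨hH.1, hH.2, hZH⟩, rfl⟩
    have hrkY : rk Y = 2 := by
      have hle2 : rk Y ≤ 2 := hrkX ▸ rk_comap_le Z X
      have hge2 : 2 ≤ rk Y := by
        obtain ⟨g₁, hg₁0, hg₁k⟩ := restr_dual (hA.2 _ hH₁A) hZH₁
        obtain ⟨g₂, hg₂0, hg₂k⟩ := restr_dual (hA.2 _ hH₂A) hZH₂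
        have hkne : LinearMap.ker g₁ ≠ LinearMap.ker g₂ := by rw [hg₁k, hg₂k]; exact hne
        have hYle : Y ≤ LinearMap.ker g₁ ⊓ LinearMap.ker g₂ := by
          rw [hg₁k, hg₂k]
          exact le_inf (Submodule.comap_mono hH₁X) (Submodule.comap_mono hH₂X)
        exact le_trans (two_le_rk_inf hg₁0 hg₂0 hkne) (rk_le_of_le hYle)
      omega
    have hFF : psi1 A Z α ∈ FF (locz (restr A Z) Y) := by
      constructor
      · intro K
        constructor
        · by_cases hK : K ∈ restr A Z
          · rw [psi1_eq hA hK]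
            apply Submodule.sum_mem
            intro H hH
            simp only [Finset.mem_filter, Set.Finite.mem_toFinset] at hH
            rw [Submodule.mem_dualAnnihilator]
            intro z hz
            rw [← hH.2.2] at hz
            simp only [LinearMap.dualMap_apply]
            exact (Submodule.mem_dualAnnihilator _).1 (hann H) _ (Submodule.mem_comap.1 hz)
          · rw [psi1_notMem hK]
            exact Submodule.zero_mem _
        · intro hKn
          by_cases hK : K ∈ restr A Z
          · rw [psi1_eq hA hK]
            apply Finset.sum_eq_zero
            intro H hH
            simp only [Finset.mem_filter, Set.Finite.mem_toFinset] at hH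
            by_cases hαH : α H = 0
            · rw [hαH, map_zero]
            · exact absurd (⟨hK, hH.2.2 ▸ Submodule.comap_mono (hsupp H hαH).2⟩ :
                K ∈ locz (restr A Z) Y) hKn
          · exact psi1_notMem hK α
      · show sumK (psi1 A Z α) = 0
        have hfin := restr_finite (Z := Z) hA
        rw [sumK_eq_sum hfin (fun K h => by by_contra hc; exact h (psi1_notMem hc α))]
        have hcongr : ∀ K ∈ hfin.toFinset, psi1 A Z α K =
            ∑ H ∈ (𝒜.filter (fun H => ¬ Z ≤ H)).filter (fun H => H.comap Z.subtype = K),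
              Z.subtype.dualMap (α H) := by
          intro K hK
          rw [psi1_eq hA (hfin.mem_toFinset.1 hK), Finset.filter_filter]
        refine (Finset.sum_congr rfl hcongr).trans ?_
        refine (Finset.sum_fiberwise_of_maps_to (fun H hH => by
          simp only [Finset.mem_filter, Set.Finite.mem_toFinset] at hH
          exact hfin.mem_toFinset.2 (mem_restr_iff.2 ⟨H, (hmem𝒜 _).1 hH.1, hH.2, rfl⟩))
          (fun H => Z.subtype.dualMap (α H))).trans ?_
        have hsplit := Finset.sum_filter_add_sum_filter_not 𝒜 (fun H => ¬ Z ≤ H)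
          (fun H => Z.subtype.dualMap (α H))
        have hz2 : ∑ H ∈ 𝒜.filter (fun H => ¬¬ Z ≤ H), Z.subtype.dualMap (α H) = 0 := by
          apply Finset.sum_eq_zero
          intro H hH
          simp only [Finset.mem_filter, not_not] at hH
          exact dualMap_eq_zero_of_le (hann H) hH.2
        rw [hz2, add_zero, htot] at hsplit
        exact hsplit
    apply Submodule.subset_span
    exact Set.mem_biUnion ⟨hYL, hrkY⟩ hFF

end Part1

section Part2

open LinearMap Set

variable {𝕂 : Type*} [Field 𝕂] {V : Type*} [AddCommGroup V] [Module 𝕂 V]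
  [FiniteDimensional 𝕂 V]

theorem exists_preimage {A : Set (Submodule 𝕂 V)} (hA : IsArrangement A)
    {Z : Submodule 𝕂 V} (hZ : Z ∈ interLattice A)
    {β : Submodule 𝕂 ↥Z → Module.Dual 𝕂 ↥Z} (hβ : β ∈ FF (restr A Z)) :
    ∃ α ∈ FF A, psi1 A Z α = β := by
  classical
  set 𝒜 := hA.1.toFinset with h𝒜
  have hmem𝒜 : ∀ H, H ∈ 𝒜 ↔ H ∈ A := fun H => hA.1.mem_toFinset
  have hfin := restr_finite (Z := Z) hA
  set ℛ := hfin.toFinset with hℛ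
  have hmemℛ : ∀ K, K ∈ ℛ ↔ K ∈ restr A Z := fun K => hfin.mem_toFinset
  have hHex : ∀ K : Submodule 𝕂 ↥Z, ∃ H, K ∈ restr A Z →
      H ∈ A ∧ ¬ Z ≤ H ∧ K = H.comap Z.subtype := by
    intro K
    by_cases hK : K ∈ restr A Z
    · obtain ⟨H, hHA, hZH, hKH⟩ := mem_restr_iff.1 hK
      exact ⟨H, fun _ => ⟨hHA, hZH, hKH⟩⟩
    · exact ⟨⊥, fun h => absurd h hK⟩
  choose Hc hHc using hHex
  have hgex : ∀ K : Submodule 𝕂 ↥Z, ∃ g, K ∈ restr A Z →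
      g ∈ (Hc K).dualAnnihilator ∧ Z.subtype.dualMap g = β K ∧ (β K = 0 → g = 0) := by
    intro K
    by_cases hK : K ∈ restr A Z
    · obtain ⟨hHA, hZH, hKH⟩ := hHc K hK
      obtain ⟨g, hg1, hg2, hg3⟩ := exists_lift_dual (hA.2 _ hHA) hZH
        (φ := β K) (by rw [← hKH]; exact (hβ.1 K).1)
      exact ⟨g, fun _ => ⟨hg1, hg2, hg3⟩⟩
    · exact ⟨0, fun h => absurd h hK⟩
  choose g hg using hgex
  set α₀ : Submodule 𝕂 V → Module.Dual 𝕂 V := fun H =>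
    if _ : H ∈ A ∧ ¬ Z ≤ H ∧ Hc (H.comap Z.subtype) = H then g (H.comap Z.subtype) else 0
    with hα₀
  have hcomapHc : ∀ K, K ∈ restr A Z → (Hc K).comap Z.subtype = K :=
    fun K hK => ((hHc K hK).2.2).symm
  have hf1 : ∀ K, K ∈ restr A Z → α₀ (Hc K) = g K := by
    intro K hK
    have hc := hcomapHc K hK
    have hcond : Hc K ∈ A ∧ ¬ Z ≤ Hc K ∧ Hc ((Hc K).comap Z.subtype) = Hc K :=
      ⟨(hHc K hK).1, (hHc K hK).2.1, by rw [hc]⟩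
    simp only [hα₀]
    rw [dif_pos hcond, hc]
  have hf2 : ∀ H, α₀ H ≠ 0 → (H ∈ A ∧ ¬ Z ≤ H ∧ Hc (H.comap Z.subtype) = H) := by
    intro H h
    by_contra hc
    apply h
    simp only [hα₀]
    rw [dif_neg hc]
  have hf2' : ∀ H, (H ∈ A ∧ ¬ Z ≤ H) → H.comap Z.subtype ∈ restr A Z :=
    fun H h => mem_restr_iff.2 ⟨H, h.1, h.2, rfl⟩
  have hf3 : ∀ H, α₀ H ∈ H.dualAnnihilator := by
    intro H
    simp only [hα₀]
    split_ifs with h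
    · have h5 := (hg (H.comap Z.subtype) (hf2' H ⟨h.1, h.2.1⟩)).1
      rw [h.2.2] at h5
      exact h5
    · exact Submodule.zero_mem _
  set γ := sumK α₀ with hγ
  have hsupp₀ : ∀ H, α₀ H ≠ 0 → H ∈ A := fun H h => (hf2 H h).1
  have hγsum : γ = ∑ H ∈ 𝒜, α₀ H := sumK_eq_sum hA.1 hsupp₀
  have himsub : ℛ.image Hc ⊆ 𝒜 := by
    intro H hH
    obtain ⟨K, hK, rfl⟩ := Finset.mem_image.1 hH
    exact (hmem𝒜 _).2 (hHc K ((hmemℛ K).1 hK)).1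
  have hdγ : Z.subtype.dualMap γ = 0 := by
    rw [hγsum, map_sum]
    rw [← Finset.sum_subset himsub (by
      intro H hH hHn
      by_cases h0 : α₀ H = 0
      · rw [h0, map_zero]
      · obtain ⟨hHA, hZH, hHcH⟩ := hf2 H h0
        exact absurd (Finset.mem_image.2 ⟨H.comap Z.subtype,
          (hmemℛ _).2 (hf2' H ⟨hHA, hZH⟩), hHcH⟩) hHn)]
    rw [Finset.sum_image (by
      intro K₁ hK₁ K₂ hK₂ he
      have h1 := hcomapHc K₁ ((hmemℛ _).1 hK₁)
      have h2 := hcomapHc K₂ ((hmemℛ _).1 hK₂)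
      rw [← h1, ← h2, he])]
    have hBK : ∀ K ∈ ℛ, Z.subtype.dualMap (α₀ (Hc K)) = β K := by
      intro K hK
      rw [hf1 K ((hmemℛ _).1 hK)]
      exact (hg K ((hmemℛ _).1 hK)).2.1
    rw [Finset.sum_congr rfl hBK]
    rw [← sumK_eq_sum hfin (fun K h => by by_contra hc; exact h ((hβ.1 K).2 hc))]
    exact hβ.2
  have hγZ : γ ∈ Z.dualAnnihilator := by
    rw [Submodule.mem_dualAnnihilator]
    intro z hz
    simpa using DFunLike.congr_fun hdγ ⟨z, hz⟩
  have hZsInf := interLattice_eq_sInf_locz hZ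
  have hSZfin : (locz A Z).Finite := hA.1.subset (fun H h => h.1)
  haveI : Finite ↥(locz A Z) := hSZfin.to_subtype
  haveI : Fintype ↥(locz A Z) := hSZfin.fintype
  have hann_eq : Z.dualAnnihilator =
      ⨆ H : ↥(locz A Z), (H : Submodule 𝕂 V).dualAnnihilator := by
    conv_lhs => rw [hZsInf, sInf_eq_iInf']
    exact Subspace.dualAnnihilator_iInf_eq _
  rw [hann_eq] at hγZ
  obtain ⟨δ, hδmem, hδsum⟩ := (Submodule.mem_iSup_iff_exists_finsupp _ _).1 hγZ
  set δ' : Submodule 𝕂 V → Module.Dual 𝕂 V := fun H =>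
    if h : H ∈ locz A Z then δ ⟨H, h⟩ else 0 with hδ'
  have hδ'supp : ∀ H, δ' H ≠ 0 → H ∈ locz A Z := by
    intro H h
    by_contra hc
    exact h (by simp only [hδ']; rw [dif_neg hc])
  have hδ'ann : ∀ H, δ' H ∈ H.dualAnnihilator := by
    intro H
    simp only [hδ']
    split_ifs with h
    · exact hδmem ⟨H, h⟩
    · exact Submodule.zero_mem _
  have hsumδ' : sumK δ' = γ := by
    rw [sumK_eq_sum hSZfin hδ'supp, ← hδsum,
      Finsupp.sum_fintype _ _ (fun i => rfl)]
    rw [Finset.sum_subtype hSZfin.toFinset (fun x => hSZfin.mem_toFinset) δ']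
    apply Finset.sum_congr rfl
    intro i _
    simp only [hδ', dif_pos i.2]
  refine ⟨α₀ - δ', ⟨fun H => ⟨?_, ?_⟩, ?_⟩, ?_⟩
  · exact Submodule.sub_mem _ (hf3 H) (hδ'ann H)
  · intro hHA
    have h1 : α₀ H = 0 := by
      simp only [hα₀]
      rw [dif_neg]
      exact fun hc => hHA hc.1
    have h2 : δ' H = 0 := by
      simp only [hδ']
      rw [dif_neg]
      exact fun hc => hHA hc.1
    simp [h1, h2]
  · show sumK (α₀ - δ') = 0
    have hsub : sumK (α₀ - δ') = sumK α₀ - sumK δ' := by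
      unfold sumK
      exact finsum_sub_distrib (hA.1.subset fun H h => hsupp₀ H h)
        (hSZfin.subset fun H h => hδ'supp H h)
    rw [hsub, hsumδ', ← hγ, sub_self]
  · funext K
    by_cases hK : K ∈ restr A Z
    · rw [psi1_eq hA hK]
      have hterm : ∀ H ∈ 𝒜.filter (fun H => ¬ Z ≤ H ∧ H.comap Z.subtype = K),
          Z.subtype.dualMap ((α₀ - δ') H) = Z.subtype.dualMap (α₀ H) := by
        intro H hH
        simp only [Finset.mem_filter] at hH
        have h2 : δ' H = 0 := by
          simp only [hδ']
          rw [dif_neg]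
          exact fun hc => hH.2.1 hc.2
        simp [h2]
      rw [Finset.sum_congr rfl hterm]
      rw [Finset.sum_eq_single (Hc K)]
      · rw [hf1 K hK]
        exact (hg K hK).2.1
      · intro H hH hne
        simp only [Finset.mem_filter] at hH
        by_cases h0 : α₀ H = 0
        · rw [h0, map_zero]
        · exfalso
          have h3 := (hf2 H h0).2.2
          rw [hH.2.2] at h3
          exact hne h3.symm
      · intro hn
        exfalso
        apply hn
        rw [Finset.mem_filter]
        obtain ⟨hHA, hZH, hKH⟩ := hHc K hK
        exact ⟨(hmem𝒜 _).2 hHA, hZH, hKH.symm⟩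
    · rw [psi1_notMem hK]
      exact ((hβ.1 K).2 hK).symm

end Part2

/-- **Proposition 4.3** (`prop:ImpiZ`): `ψ̃₁(im π₂) ⊆ im π₂^Z`, where
`im π₂ = Σ_{X ∈ L₂(A)} F(A_X) ⊆ F(A)` is the span of the union of the subspaces
`F(A_X)`, `X ∈ L₂(A)`, and similarly for `A^Z`.  In particular, the induced map
`coker π₂ → coker π₂^Z` is surjective:  every `β ∈ F(A^Z)` differs from the image
`ψ̃₁(α)` of some `α ∈ F(A)` by an element of `im π₂^Z`. -/
theorem psi1_image_of_im_pi2 {𝕂 : Type*} [Field 𝕂] {ℓ : ℕ}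
    (A : Set (Submodule 𝕂 (Fin ℓ → 𝕂))) (hA : IsArrangement A)
    (Z : Submodule 𝕂 (Fin ℓ → 𝕂)) (hZ : Z ∈ interLattice A) :
    (∀ α ∈ Submodule.span 𝕂 (⋃ X ∈ {X ∈ interLattice A | rk X = 2}, FF (locz A X)),
      psi1 A Z α ∈ Submodule.span 𝕂
        (⋃ Y ∈ {Y ∈ interLattice (restr A Z) | rk Y = 2}, FF (locz (restr A Z) Y))) ∧
    (∀ β ∈ FF (restr A Z), ∃ α ∈ FF A,
      psi1 A Z α - β ∈ Submodule.span 𝕂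
        (⋃ Y ∈ {Y ∈ interLattice (restr A Z) | rk Y = 2}, FF (locz (restr A Z) Y))) := by
  constructor
  · intro α hα
    induction hα using Submodule.span_induction with
    | mem x hx =>
      obtain ⟨S, ⟨X, rfl⟩, hxS⟩ := hx
      simp only [Set.mem_iUnion] at hxS
      obtain ⟨⟨hXL, hXrk⟩, hxFF⟩ := hxS
      exact psi1_generator hA Z hXL hXrk hxFF
    | zero =>
      rw [psi1_zero hA]
      exact Submodule.zero_mem _
    | add x y hx hy ihx ihy =>
      rw [psi1_add hA]
      exact Submodule.add_mem _ ihx ihy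
    | smul c x hx ihx =>
      rw [psi1_smul hA]
      exact Submodule.smul_mem _ _ ihx
  · intro β hβ
    obtain ⟨α, hαFF, hαψ⟩ := exists_preimage hA hZ hβ
    exact ⟨α, hαFF, by rw [hαψ, sub_self]; exact Submodule.zero_mem _⟩
end
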